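/- arXiv:1701.04529 — 4 statements merged into one kernel-verified Lean document; each statement's English description precedes it below -/
import Mathlib

section
/- Let X be a finite set of N points in ℝ² in general position, let H ≥ 1 be an integer, and let K be an integer with K ≥ ⌈N/(2H)⌉. Then there exists a set L of K distinct affine lines in ℝ², each disjoint from X, such that every cell of L contains at most H points of X. -/
open Set

/-- Points of the plane. -/
abbrev Pt := ℝ × ℝ

/-- An affine line in ℝ², given by a nontrivial linear equation. -/
def IsAffLine (l : Set Pt) : Prop :=
  ∃ a b c : ℝ, (a ≠ 0 ∨ b ≠ 0) ∧ l = {p : Pt | a * p.1 + b * p.2 = c}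

/-- An open half-plane in ℝ². -/
def IsOpenHalfPlane (H : Set Pt) : Prop :=
  ∃ a b c : ℝ, (a ≠ 0 ∨ b ≠ 0) ∧ H = {p : Pt | a * p.1 + b * p.2 < c}

/-- `A` and `B` are linearly separable: some affine line has `A` strictly on
one side and `B` strictly on the other side. -/
def LinSep (A B : Set Pt) : Prop :=
  ∃ a b c : ℝ, (a ≠ 0 ∨ b ≠ 0) ∧ (∀ p ∈ A, a * p.1 + b * p.2 < c) ∧
    (∀ p ∈ B, c < a * p.1 + b * p.2)

/-- General position: no three (distinct) points of `X` are collinear. -/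
def GenPos (X : Set Pt) : Prop :=
  ∀ p ∈ X, ∀ q ∈ X, ∀ r ∈ X, p ≠ q → p ≠ r → q ≠ r →
    ¬ Collinear ℝ ({p, q, r} : Set Pt)

/-- Convex position: no point of `X` lies in the convex hull of the others. -/
def ConvexPos (X : Set Pt) : Prop :=
  ∀ p ∈ X, p ∉ convexHull ℝ (X \ {p})

/-- A cell of an arrangement `L` of lines: a connected component of the
complement of the union of the lines. -/
def IsCell (L : Set (Set Pt)) (cell : Set Pt) : Prop :=
  ∃ p ∈ (⋃₀ L)ᶜ, cell = connectedComponentIn (⋃₀ L)ᶜ p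

/-- `S` has at most `d` connected components: among any `d + 1` points of `S`,
two lie in the same connected component of `S`. -/
def CompsLE (S : Set Pt) (d : ℕ) : Prop :=
  ∀ f : Fin (d + 1) → Pt, (∀ i, f i ∈ S) →
    ∃ i j, i ≠ j ∧ connectedComponentIn S (f i) = connectedComponentIn S (f j)

/-- A Jordan curve: the image of a continuous injective map from the unit
circle to the plane. -/
def IsJordanCurve (J : Set Pt) : Prop :=
  ∃ f : EuclideanSpace ℝ (Fin 2) → Pt,
    ContinuousOn f (Metric.sphere 0 1) ∧ Set.InjOn f (Metric.sphere 0 1) ∧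
      J = f '' (Metric.sphere 0 1)

/-- `J` has stabbing number at most `d` (a natural number): every affine line
meets `J` in at most `d` connected components. -/
def StabLE (J : Set Pt) (d : ℕ) : Prop :=
  ∀ l, IsAffLine l → CompsLE (J ∩ l) d

/-- `J` has stabbing number at most a real number `d`: every affine line meets
`J` in at most `⌊d⌋₊` connected components. -/
def StabLER (J : Set Pt) (d : ℝ) : Prop :=
  ∀ l, IsAffLine l → CompsLE (J ∩ l) ⌊d⌋₊

/-!
The lines are built one at a time. Each line halves the current block `C` of at most `2H` points
and, at the same time, cuts the next block of `2H` points off the remaining points `R`, which lie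
beyond `C`; the last line halves the last block. Two points of `X` in one cell are separated by no
line, so they lie in the same half of the same block.

A line with prescribed numbers `α < #A` and `β ≤ #B` of points of `A` and of `B` below it, where
`A` lies below `B` in some direction, comes from a discrete intermediate value argument. Turn the
direction until `B` lies below `A`; the number of points of `B` preceded by at most `α` points of
`A` runs from `0` to `#B`, and by general position it changes by at most one at a time. At a
direction where it equals `β`, a line just below the `(α + 1)`-st point of `A` does the job.
-/

open Finset Filter Topology

noncomputable section

namespace LineArrangement

section Counting

variable {P : Type*}

def numBelow (k : P → ℝ) (A : Finset P) (q : P) : ℕ := #{a ∈ A | k a < k q}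

def cutCount (k : P → ℝ) (A B : Finset P) (m : ℕ) : ℕ := #{q ∈ B | numBelow k A q ≤ m}

def Refines (k k₀ : P → ℝ) (S : Set P) : Prop :=
  ∀ p ∈ S, ∀ q ∈ S, k₀ p < k₀ q → k p < k q

def LevelsAtMostTwo (k : P → ℝ) (S : Set P) : Prop :=
  ∀ p ∈ S, ∀ q ∈ S, ∀ r ∈ S, k p = k q → k p = k r → p = q ∨ p = r ∨ q = r

lemma numBelow_mem_Icc {k k₀ : P → ℝ} {A : Finset P} {S : Set P} {q : P}
    (hk : Refines k k₀ S) (hA : ↑A ⊆ S) (hq : q ∈ S) :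
    numBelow k A q ∈
      Set.Icc #{a ∈ A | k₀ a < k₀ q} (#{a ∈ A | k₀ a < k₀ q} + #{a ∈ A | k₀ a = k₀ q}) := by
  classical
  refine ⟨Finset.card_le_card fun a ha => ?_, ?_⟩
  · simp only [mem_filter] at ha ⊢
    exact ⟨ha.1, hk a (hA ha.1) q hq ha.2⟩
  · calc numBelow k A q ≤ #({a ∈ A | k₀ a < k₀ q} ∪ {a ∈ A | k₀ a = k₀ q}) := by
          refine Finset.card_le_card fun a ha => ?_
          simp only [mem_filter, Finset.mem_union] at ha ⊢
          have : ¬ k₀ q < k₀ a := fun h => (hk q hq a (hA ha.1) h).not_gt ha.2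
          rcases (not_lt.1 this).lt_or_eq with h | h
          · exact Or.inl ⟨ha.1, h⟩
          · exact Or.inr ⟨ha.1, h⟩
      _ ≤ _ := card_union_le _ _

/-- `k` and `k'` differ only in how they break the ties of `k₀`. A point of `B` counted by `k` but
not by `k'` is tied with a point of `A` and has exactly `m` points of `A` strictly below it in `k₀`;
since a level of `k₀` holds at most two points, two such points of `B` would lie at different
levels and so have different numbers of points of `A` below them. -/
theorem cutCount_le_cutCount_add_one {k k' k₀ : P → ℝ} {A B : Finset P} (m : ℕ)
    (hAB : Disjoint A B) (hlev : LevelsAtMostTwo k₀ (↑A ∪ ↑B))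
    (hk : Refines k k₀ (↑A ∪ ↑B)) (hk' : Refines k' k₀ (↑A ∪ ↑B)) :
    cutCount k A B m ≤ cutCount k' A B m + 1 := by
  classical
  have hA : ↑A ⊆ ((↑A ∪ ↑B) : Set P) := by simp
  have hB : ∀ q ∈ B, q ∈ ((↑A ∪ ↑B) : Set P) := by simp +contextual
  have hne : ∀ a ∈ A, ∀ q ∈ B, a ≠ q := fun a ha q hq h => disjoint_left.1 hAB ha (h ▸ hq)
  set D := {q ∈ B | numBelow k A q ≤ m ∧ m < numBelow k' A q}
  have hD : ∀ q ∈ D, #{a ∈ A | k₀ a < k₀ q} = m ∧ ∃ a ∈ A, k₀ a = k₀ q := by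
    intro q hq
    simp only [D, mem_filter] at hq
    obtain ⟨hlo, -⟩ := numBelow_mem_Icc hk hA (hB q hq.1)
    obtain ⟨-, hhi⟩ := numBelow_mem_Icc hk' hA (hB q hq.1)
    have htie : #{a ∈ A | k₀ a = k₀ q} ≤ 1 := by
      refine card_le_one.2 fun a ha a' ha' => ?_
      simp only [mem_filter] at ha ha'
      rcases hlev q (hB q hq.1) a (hA ha.1) a' (hA ha'.1) ha.2.symm ha'.2.symm with h | h | h
      · exact absurd h.symm (hne a ha.1 q hq.1)
      · exact absurd h.symm (hne a' ha'.1 q hq.1)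
      · exact h
    refine ⟨by omega, ?_⟩
    obtain ⟨a, ha⟩ := card_pos.1 (show 0 < #{a ∈ A | k₀ a = k₀ q} by omega)
    exact ⟨a, (mem_filter.1 ha).1, (mem_filter.1 ha).2⟩
  have hD_lt : ∀ q ∈ D, ∀ q' ∈ D, k₀ q < k₀ q' → False := by
    intro q hq q' hq' hlt
    obtain ⟨hm, a, ha, hqa⟩ := hD q hq
    have hsub : insert a {a ∈ A | k₀ a < k₀ q} ⊆ {a ∈ A | k₀ a < k₀ q'} := by
      intro b hb
      simp only [Finset.mem_insert, mem_filter] at hb ⊢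
      rcases hb with rfl | hb
      · exact ⟨ha, hqa ▸ hlt⟩
      · exact ⟨hb.1, hb.2.trans hlt⟩
    have := Finset.card_le_card hsub
    rw [card_insert_of_notMem (by simp [hqa]), hm, (hD q' hq').1] at this
    omega
  have hDcard : #D ≤ 1 := by
    refine card_le_one.2 fun q hq q' hq' => ?_
    obtain ⟨-, a, ha, hqa⟩ := hD q hq
    have hqB := (mem_filter.1 hq).1
    have hq'B := (mem_filter.1 hq').1
    rcases lt_trichotomy (k₀ q) (k₀ q') with h | h | h
    · exact (hD_lt q hq q' hq' h).elim
    · rcases hlev q (hB q hqB) q' (hB q' hq'B) a (hA ha) h hqa.symm with h | h | h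
      · exact h
      · exact absurd h.symm (hne a ha q hqB)
      · exact absurd h.symm (hne a ha q' hq'B)
    · exact (hD_lt q' hq' q hq h).elim
  calc cutCount k A B m ≤ #({q ∈ B | numBelow k' A q ≤ m} ∪ D) := by
        refine Finset.card_le_card fun q hq => ?_
        simp only [mem_filter, Finset.mem_union, D] at hq ⊢
        by_cases h : numBelow k' A q ≤ m
        · exact Or.inl ⟨hq.1, h⟩
        · exact Or.inr ⟨hq.1, hq.2, not_le.1 h⟩
    _ ≤ cutCount k' A B m + #D := card_union_le _ _
    _ ≤ cutCount k' A B m + 1 := by omega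

lemma cutCount_eq_zero {k : P → ℝ} {A B : Finset P} {m : ℕ} (hm : m < #A)
    (hk : ∀ a ∈ A, ∀ q ∈ B, k a < k q) : cutCount k A B m = 0 := by
  refine card_eq_zero.2 (Finset.filter_eq_empty_iff.2 fun q hq => ?_)
  rwa [numBelow, Finset.filter_true_of_mem fun a ha => hk a ha q hq, not_le]

lemma cutCount_eq_card {k : P → ℝ} {A B : Finset P} (m : ℕ)
    (hk : ∀ a ∈ A, ∀ q ∈ B, k q < k a) : cutCount k A B m = #B := by
  refine congrArg card (Finset.filter_true_of_mem fun q hq => ?_)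
  rw [numBelow, Finset.filter_false_of_mem fun a ha => (hk a ha q hq).not_gt, Finset.card_empty]
  exact Nat.zero_le m

lemma numBelow_lt_numBelow {k : P → ℝ} {A : Finset P} {a q : P} (ha : a ∈ A) (h : k a < k q) :
    numBelow k A a < numBelow k A q := by
  refine Finset.card_lt_card (Finset.ssubset_iff_of_subset ?_ |>.2 ⟨a, ?_, ?_⟩)
  · intro b hb
    simp only [mem_filter] at hb ⊢
    exact ⟨hb.1, hb.2.trans h⟩
  · simp [ha, h]
  · simp

lemma numBelow_le_numBelow {k : P → ℝ} {A : Finset P} {a q : P} (h : k q ≤ k a) :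
    numBelow k A q ≤ numBelow k A a :=
  Finset.card_le_card fun b hb => by
    simp only [mem_filter] at hb ⊢
    exact ⟨hb.1, hb.2.trans_le h⟩

lemma exists_numBelow_eq {k : P → ℝ} {A : Finset P} (hk : InjOn k A) {m : ℕ} (hm : m < #A) :
    ∃ a ∈ A, numBelow k A a = m := by
  have hmaps : MapsTo (numBelow k A) A (Finset.range #A) := fun a ha => by
    refine mem_range.2 (Finset.card_lt_card (Finset.filter_ssubset.2 ⟨a, ha, lt_irrefl _⟩))
  have hinj : InjOn (numBelow k A) A := by
    intro a ha a' ha' h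
    by_contra hne
    rcases (hk.ne ha ha' hne).lt_or_gt with hlt | hlt
    · exact (numBelow_lt_numBelow ha hlt).ne h
    · exact (numBelow_lt_numBelow ha' hlt).ne' h
  obtain ⟨a, ha, h⟩ := Finset.surjOn_of_injOn_of_card_le _ hmaps hinj (by simp) (mem_range.2 hm)
  exact ⟨a, ha, h⟩

lemma exists_threshold_cutCount {k : P → ℝ} {A B : Finset P} (hk : InjOn k (↑A ∪ ↑B))
    (hAB : Disjoint A B) {m : ℕ} (hm : m < #A) :
    ∃ x, #{a ∈ A | k a < x} = m ∧ #{q ∈ B | k q < x} = cutCount k A B m := by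
  obtain ⟨a, ha, ham⟩ := exists_numBelow_eq (hk.mono subset_union_left) hm
  refine ⟨k a, ham, congrArg card (Finset.filter_congr fun q hq => ?_)⟩
  constructor
  · exact fun h => ham ▸ numBelow_le_numBelow h.le
  · intro h
    by_contra hlt
    have hne : k q ≠ k a := hk.ne (by simp [hq]) (by simp [ha])
      (fun h => disjoint_left.1 hAB ha (h ▸ hq))
    exact (numBelow_lt_numBelow ha (lt_of_le_of_ne (not_lt.1 hlt) hne.symm)).not_ge (ham ▸ h)

lemma exists_card_filter_lt_eq {k : P → ℝ} {S : Finset P} (hk : InjOn k S) {m : ℕ}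
    (hm : m < #S ∨ m = 0) : ∃ x, #{p ∈ S | k p < x} = m := by
  rcases S.eq_empty_or_nonempty with rfl | hS
  · exact ⟨0, by simpa [eq_comm] using hm⟩
  · obtain ⟨a, -, h⟩ := exists_numBelow_eq hk (hm.elim id fun h => h ▸ hS.card_pos)
    exact ⟨k a, h⟩

lemma exists_notMem_forall_lt_iff_lt (S : Finset P) (k : P → ℝ) (x : ℝ)
    {bad : Set ℝ} (hbad : bad.Finite) : ∃ s ∉ bad, ∀ p ∈ S, (k p < s ↔ k p < x) := by
  set T := insert (x - 1) {y ∈ S.image k | y < x}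
  have hT : T.Nonempty := Finset.insert_nonempty _ _
  have hmx : T.max' hT < x := by
    rcases Finset.mem_insert.1 (T.max'_mem hT) with h | h
    · rw [h]; linarith
    · exact (mem_filter.1 h).2
  obtain ⟨s, ⟨hms, hsx⟩, hs⟩ := ((Ioo_infinite hmx).sdiff hbad).nonempty
  refine ⟨s, hs, fun p hp => ⟨fun h => h.trans hsx, fun h => ?_⟩⟩
  have hpT : k p ∈ T := Finset.mem_insert_of_mem (mem_filter.2 ⟨mem_image_of_mem k hp, h⟩)
  exact (T.le_max' _ hpT).trans_lt hms

end Counting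

lemma eventually_refines {T P : Type*} [TopologicalSpace T] {k : T → P → ℝ}
    (hk : ∀ p, Continuous fun t => k t p) {S : Set P} (hS : S.Finite) (t₀ : T) :
    ∀ᶠ t in 𝓝 t₀, Refines (k t) (k t₀) S := by
  have : ∀ p ∈ S, ∀ q ∈ S, ∀ᶠ t in 𝓝 t₀, k t₀ p < k t₀ q → k t p < k t q := by
    intro p _ q _
    by_cases h : k t₀ p < k t₀ q
    · filter_upwards [(hk p).continuousAt.eventually_lt (hk q).continuousAt h] with t ht
      exact fun _ => ht
    · exact Eventually.of_forall fun _ h' => absurd h' h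
  filter_upwards [hS.eventually_all.2 fun p hp => hS.eventually_all.2 (this p hp)]
    with t ht p hp q hq
  exact ht p hp q hq

/-- Otherwise the points near which `φ < β` off `E`, and those near which `β < φ` off `E`, would
form two disjoint open sets covering `X`. -/
theorem exists_notMem_eq_of_eventually_le_add_one {X : Type*} [TopologicalSpace X]
    [PreconnectedSpace X] {φ : X → ℕ} {E : Set X} (hE : Dense Eᶜ)
    (hφ : ∀ x, ∀ᶠ y in 𝓝 x ×ˢ 𝓝 x, φ y.1 ≤ φ y.2 + 1) {a b : X} {β : ℕ}
    (ha : ∀ᶠ x in 𝓝 a, φ x ≤ β) (hb : ∀ᶠ x in 𝓝 b, β ≤ φ x) : ∃ x ∉ E, φ x = β := by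
  by_contra! hne
  set U := {x | ∀ᶠ y in 𝓝 x, y ∉ E → φ y < β}
  set V := {x | ∀ᶠ y in 𝓝 x, y ∉ E → β < φ y}
  have hcover : ∀ x, x ∈ U ∨ x ∈ V := by
    intro x
    obtain ⟨W, hW, hWφ⟩ := eventually_prod_self_iff'.1 (hφ x)
    obtain ⟨y₀, hy₀W, hy₀E⟩ := mem_closure_iff_nhds.1 (hE x) W hW
    rcases (hne y₀ hy₀E).lt_or_gt with h | h
    · refine Or.inl (Filter.mem_of_superset hW fun y hy hyE => ?_)
      exact lt_of_le_of_ne (by have := hWφ y hy y₀ hy₀W; dsimp only at this; omega) (hne y hyE)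
    · refine Or.inr (Filter.mem_of_superset hW fun y hy hyE => ?_)
      exact lt_of_le_of_ne (by have := hWφ y₀ hy₀W y hy; dsimp only at this; omega) (hne y hyE).symm
  have hdisj : ∀ x, x ∈ U → x ∈ V → False := by
    intro x hU hV
    obtain ⟨y, hy, hyE⟩ := ((hU.and hV).and_frequently (mem_closure_iff_frequently.1 (hE x))).exists
    exact (hy.1 hyE).not_gt (hy.2 hyE)
  have haU : a ∈ U := by
    filter_upwards [ha] with y hy hyE using lt_of_le_of_ne hy (hne y hyE)
  have hbV : b ∈ V := by
    filter_upwards [hb] with y hy hyE using lt_of_le_of_ne hy (hne y hyE).symm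
  obtain ⟨x, -, hxU, hxV⟩ := isPreconnected_univ U V isOpen_setOfPred_eventually_nhds
    isOpen_setOfPred_eventually_nhds (fun x _ => hcover x) ⟨a, trivial, haU⟩ ⟨b, trivial, hbV⟩
  exact hdisj x hxU hxV

section Plane

def dot (u p : Pt) : ℝ := u.1 * p.1 + u.2 * p.2

def perp (u : Pt) : Pt := (-u.2, u.1)

@[simp] lemma dot_add_left (u v p : Pt) : dot (u + v) p = dot u p + dot v p := by
  simp only [dot, Prod.fst_add, Prod.snd_add]; ring

@[simp] lemma dot_smul_left (c : ℝ) (u p : Pt) : dot (c • u) p = c * dot u p := by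
  simp only [dot, Prod.smul_fst, Prod.smul_snd, smul_eq_mul]; ring

lemma dot_comm (u p : Pt) : dot u p = dot p u := by
  simp only [dot]; ring

lemma continuous_dot (u : Pt) : Continuous (dot u) := by
  unfold dot; fun_prop

lemma fst_ne_zero_or_snd_ne_zero {u : Pt} (hu : u ≠ 0) : u.1 ≠ 0 ∨ u.2 ≠ 0 := by
  contrapose! hu
  exact Prod.ext hu.1 hu.2

lemma dot_self_pos {u : Pt} (hu : u ≠ 0) : 0 < dot u u := by
  unfold dot
  rcases fst_ne_zero_or_snd_ne_zero hu with h | h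
  · nlinarith [mul_self_pos.2 h, mul_self_nonneg u.2]
  · nlinarith [mul_self_pos.2 h, mul_self_nonneg u.1]

lemma perp_add_smul_ne_zero {u : Pt} (hu : u ≠ 0) (t : ℝ) : perp u + t • u ≠ 0 := by
  intro h
  have := congrArg (fun v => dot v (perp u)) h
  simp only [dot_add_left, dot_smul_left] at this
  have hpos := dot_self_pos hu
  simp only [dot, perp, Prod.fst_zero, Prod.snd_zero] at this hpos
  nlinarith

lemma eq_of_dot_eq_of_dot_perp_eq {u p q : Pt} (hu : u ≠ 0) (h : dot u p = dot u q)
    (h' : dot (perp u) p = dot (perp u) q) : p = q := by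
  have hpos := dot_self_pos hu
  simp only [dot, perp] at h h' hpos
  refine Prod.ext (mul_left_cancel₀ hpos.ne' ?_) (mul_left_cancel₀ hpos.ne' ?_)
  · linear_combination u.1 * h - u.2 * h'
  · linear_combination u.2 * h + u.1 * h'

lemma collinear_of_dot_eq {u p q r : Pt} (hu : u ≠ 0) (hq : dot u q = dot u p)
    (hr : dot u r = dot u p) : Collinear ℝ ({p, q, r} : Set Pt) := by
  rw [collinear_iff_of_mem (mem_insert p _)]
  refine ⟨perp u, fun y hy => ⟨(dot (perp u) y - dot (perp u) p) / dot u u, ?_⟩⟩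
  have hy : dot u y = dot u p := by
    rcases hy with rfl | rfl | rfl
    exacts [rfl, hq, hr]
  have hr := div_mul_cancel₀ (dot (perp u) y - dot (perp u) p) (dot_self_pos hu).ne'
  set r := (dot (perp u) y - dot (perp u) p) / dot u u
  refine eq_of_dot_eq_of_dot_perp_eq hu ?_ ?_ <;>
    simp only [dot, perp, vadd_eq_add, Prod.fst_add, Prod.snd_add, Prod.smul_fst,
      Prod.smul_snd, smul_eq_mul] at hy hr ⊢
  · linear_combination hy
  · linear_combination -hr

lemma _root_.GenPos.mono {S T : Set Pt} (h : GenPos T) (hST : S ⊆ T) : GenPos S :=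
  fun p hp q hq r hr => h p (hST hp) q (hST hq) r (hST hr)

lemma _root_.GenPos.levelsAtMostTwo {S : Set Pt} (h : GenPos S) {u : Pt} (hu : u ≠ 0) :
    LevelsAtMostTwo (dot u) S := by
  intro p hp q hq r hr hpq hpr
  by_contra! hne
  exact h p hp q hq r hr hne.1 hne.2.1 hne.2.2 (collinear_of_dot_eq hu hpq.symm hpr.symm)

end Plane

section Rotation

lemma dot_perp_add_smul (u p : Pt) (t : ℝ) :
    dot (perp u + t • u) p = dot (perp u) p + t * dot u p := by
  simp

lemma finite_setOf_not_injOn {S : Set Pt} (hS : S.Finite) {u : Pt} (hu : u ≠ 0) :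
    {t : ℝ | ¬ InjOn (dot (perp u + t • u)) S}.Finite := by
  refine ((hS.prod hS).image fun pq => (dot (perp u) pq.2 - dot (perp u) pq.1) /
    (dot u pq.1 - dot u pq.2)).subset fun t ht => ?_
  simp only [InjOn, not_forall, mem_ofPred_eq, dot_perp_add_smul] at ht
  obtain ⟨p, hp, q, hq, hpq, hne⟩ := ht
  refine ⟨(p, q), ⟨hp, hq⟩, ?_⟩
  have hu' : dot u p ≠ dot u q := fun h => hne (eq_of_dot_eq_of_dot_perp_eq hu h (by
    rw [h] at hpq; linarith))
  rw [div_eq_iff (sub_ne_zero.2 hu')]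
  linarith


lemma exists_injOn_dot {S : Set Pt} (hS : S.Finite) : ∃ u ≠ 0, InjOn (dot u) S := by
  have he : ((1, 0) : Pt) ≠ 0 := by simp
  obtain ⟨t, ht⟩ := (finite_setOf_not_injOn hS he).exists_notMem
  exact ⟨_, perp_add_smul_ne_zero he t, not_not.1 ht⟩

theorem exists_injOn_cutCount_eq {A B : Finset Pt} (hgp : GenPos (↑A ∪ ↑B)) (hAB : Disjoint A B)
    {u₀ : Pt} (hu₀ : u₀ ≠ 0) (hsep : ∀ a ∈ A, ∀ b ∈ B, dot u₀ a < dot u₀ b) {α β : ℕ}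
    (hα : α < #A) (hβ : β ≤ #B) :
    ∃ u ≠ 0, InjOn (dot u) (↑A ∪ ↑B) ∧ cutCount (dot u) A B α = β := by
  set k : ℝ → Pt → ℝ := fun t => dot (perp u₀ + t • u₀)
  have hcont : ∀ p, Continuous fun t => k t p := fun p => by
    simp only [k, dot_perp_add_smul]; fun_prop
  have hS : (↑A ∪ ↑B : Set Pt).Finite := A.finite_toSet.union B.finite_toSet
  have hloc : ∀ t₀, ∀ᶠ y in 𝓝 t₀ ×ˢ 𝓝 t₀,
      cutCount (k y.1) A B α ≤ cutCount (k y.2) A B α + 1 := by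
    intro t₀
    have h := eventually_refines hcont hS t₀
    filter_upwards [h.prod_mk h] with y hy
    exact cutCount_le_cutCount_add_one α hAB
      (hgp.levelsAtMostTwo (perp_add_smul_ne_zero hu₀ t₀)) hy.1 hy.2
  have hlo : ∀ᶠ t in atTop, ∀ a ∈ A, ∀ b ∈ B, k t a < k t b := by
    refine (Finset.eventually_all A).2 fun a ha => (Finset.eventually_all B).2 fun b hb => ?_
    filter_upwards [eventually_gt_atTop ((dot (perp u₀) a - dot (perp u₀) b) /
      (dot u₀ b - dot u₀ a))] with t ht
    rw [div_lt_iff₀ (sub_pos.2 (hsep a ha b hb))] at ht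
    simp only [k, dot_perp_add_smul]
    linarith
  have hhi : ∀ᶠ t in atBot, ∀ a ∈ A, ∀ b ∈ B, k t b < k t a := by
    refine (Finset.eventually_all A).2 fun a ha => (Finset.eventually_all B).2 fun b hb => ?_
    filter_upwards [eventually_lt_atBot ((dot (perp u₀) a - dot (perp u₀) b) /
      (dot u₀ b - dot u₀ a))] with t ht
    rw [lt_div_iff₀ (sub_pos.2 (hsep a ha b hb))] at ht
    simp only [k, dot_perp_add_smul]
    linarith
  obtain ⟨a, ha⟩ := hlo.exists
  obtain ⟨b, hb⟩ := hhi.exists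
  have hlo' : ∀ᶠ t in 𝓝 a, cutCount (k t) A B α ≤ β := by
    filter_upwards [eventually_refines hcont hS a] with t ht
    rw [cutCount_eq_zero hα fun a' ha' b' hb' =>
      ht a' (by simp [ha']) b' (by simp [hb']) (ha a' ha' b' hb')]
    exact Nat.zero_le β
  have hhi' : ∀ᶠ t in 𝓝 b, β ≤ cutCount (k t) A B α := by
    filter_upwards [eventually_refines hcont hS b] with t ht
    rwa [cutCount_eq_card α fun a' ha' b' hb' =>
      ht b' (by simp [hb']) a' (by simp [ha']) (hb a' ha' b' hb')]
  obtain ⟨t, ht, htβ⟩ := exists_notMem_eq_of_eventually_le_add_one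
    ((finite_setOf_not_injOn hS hu₀).countable.dense_compl ℝ) hloc hlo' hhi'
  exact ⟨_, perp_add_smul_ne_zero hu₀ t, not_not.1 ht, htβ⟩

end Rotation

section Lines

def lineOf (l : Pt × ℝ) : Set Pt := {p | dot l.1 p = l.2}

def SameSide (l : Pt × ℝ) (p q : Pt) : Prop := (dot l.1 p < l.2 ↔ dot l.1 q < l.2)

instance (l : Pt × ℝ) (p q : Pt) : Decidable (SameSide l p q) :=
  inferInstanceAs (Decidable (_ ↔ _))

def SplitsInto (Lf : List (Pt × ℝ)) (S : Finset Pt) (H : ℕ) : Prop :=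
  ∀ p ∈ S, #{q ∈ S | ∀ l ∈ Lf, SameSide l p q} ≤ H

lemma splitsInto_of_card_le {S : Finset Pt} {H : ℕ} (h : #S ≤ H) (Lf : List (Pt × ℝ)) :
    SplitsInto Lf S H :=
  fun _ _ => (Finset.card_filter_le _ _).trans h

lemma SplitsInto.cons {Lf : List (Pt × ℝ)} {S : Finset Pt} {H : ℕ} {l : Pt × ℝ}
    (hlo : SplitsInto Lf {q ∈ S | dot l.1 q < l.2} H)
    (hhi : SplitsInto Lf {q ∈ S | ¬ dot l.1 q < l.2} H) : SplitsInto (l :: Lf) S H := by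
  intro p hp
  by_cases hpl : dot l.1 p < l.2
  · refine le_trans (Finset.card_le_card ?_) (hlo p (by simp [hp, hpl]))
    intro q hq
    rw [Finset.mem_filter, List.forall_mem_cons] at hq
    rw [Finset.mem_filter, Finset.mem_filter]
    exact ⟨⟨hq.1, hq.2.1.1 hpl⟩, hq.2.2⟩
  · refine le_trans (Finset.card_le_card ?_) (hhi p (by simpa [hp] using hpl))
    intro q hq
    rw [Finset.mem_filter, List.forall_mem_cons] at hq
    rw [Finset.mem_filter, Finset.mem_filter]
    exact ⟨⟨hq.1, fun h => hpl (hq.2.1.2 h)⟩, hq.2.2⟩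

lemma injective_lineOf {u : Pt} (hu : u ≠ 0) : Function.Injective fun s : ℝ => lineOf (u, s) := by
  intro s s' h
  have hmem : (s / dot u u) • u ∈ lineOf (u, s) := by
    simp [lineOf, dot_comm u, div_mul_cancel₀ _ (dot_self_pos hu).ne']
  rw [show lineOf (u, s) = lineOf (u, s') from h] at hmem
  simpa [lineOf, dot_comm u, div_mul_cancel₀ _ (dot_self_pos hu).ne'] using hmem

lemma isAffLine_lineOf {l : Pt × ℝ} (hl : l.1 ≠ 0) : IsAffLine (lineOf l) :=
  ⟨l.1.1, l.1.2, l.2, fst_ne_zero_or_snd_ne_zero hl, rfl⟩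

lemma _root_.IsPreconnected.sameSide {T : Set Pt} (hT : IsPreconnected T) {l : Pt × ℝ}
    (hl : Disjoint T (lineOf l)) {p q : Pt} (hp : p ∈ T) (hq : q ∈ T) : SameSide l p q := by
  have key : ∀ p ∈ T, ∀ q ∈ T, dot l.1 p < l.2 → dot l.1 q < l.2 := by
    intro p hp q hq hpl
    by_contra hql
    obtain ⟨r, hr, hrl⟩ := hT.intermediate_value hp hq (continuous_dot l.1).continuousOn
      ⟨hpl.le, not_lt.1 hql⟩
    exact Set.disjoint_left.1 hl hr hrl
  exact ⟨key p hp q hq, key q hq p hp⟩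

lemma ncard_inter_le_of_isCell {X : Finset Pt} {H : ℕ} {Lf : List (Pt × ℝ)}
    (hX : SplitsInto Lf X H) {cell : Set Pt} (hcell : IsCell ↑(Lf.map lineOf).toFinset cell) :
    ((X : Set Pt) ∩ cell).ncard ≤ H := by
  obtain ⟨p₀, -, rfl⟩ := hcell
  set T := connectedComponentIn (⋃₀ (↑(Lf.map lineOf).toFinset : Set (Set Pt)))ᶜ p₀
  rcases ((X : Set Pt) ∩ T).eq_empty_or_nonempty with h | ⟨p, hpX, hpT⟩
  · simp [h]
  have hsub : (X : Set Pt) ∩ T ⊆ ↑{q ∈ X | ∀ l ∈ Lf, SameSide l p q} := by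
    rintro q ⟨hqX, hqT⟩
    refine Finset.mem_coe.2 (Finset.mem_filter.2 ⟨hqX, fun l hl => ?_⟩)
    refine isPreconnected_connectedComponentIn.sameSide ?_ hpT hqT
    refine (disjoint_compl_left_iff_subset.2 (subset_sUnion_of_mem ?_)).mono_left
      (connectedComponentIn_subset _ _)
    exact Finset.mem_coe.2 (List.mem_toFinset.2 (List.mem_map_of_mem hl))
  calc ((X : Set Pt) ∩ T).ncard ≤ #{q ∈ X | ∀ l ∈ Lf, SameSide l p q} := by
        rw [← Set.ncard_coe_finset]
        exact Set.ncard_le_ncard hsub (Finset.finite_toSet _)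
    _ ≤ H := hX p hpX

theorem exists_line_cutting {X A B : Finset Pt} (hgp : GenPos (↑A ∪ ↑B)) (hAB : Disjoint A B)
    (hsep : ∃ u ≠ 0, ∀ a ∈ A, ∀ b ∈ B, dot u a < dot u b) {α β : ℕ}
    (hα : α < #A ∨ α = 0) (hβ : β < #B ∨ β = 0) (F : Finset (Set Pt)) :
    ∃ l : Pt × ℝ, l.1 ≠ 0 ∧ (∀ p ∈ X, dot l.1 p ≠ l.2) ∧ lineOf l ∉ F ∧
      #{a ∈ A | dot l.1 a < l.2} = α ∧ #{b ∈ B | dot l.1 b < l.2} = β := by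
  classical
  obtain ⟨u, hu, x, hxA, hxB⟩ : ∃ u ≠ 0, ∃ x,
      #{a ∈ A | dot u a < x} = α ∧ #{b ∈ B | dot u b < x} = β := by
    by_cases hne : A.Nonempty ∧ B.Nonempty
    · obtain ⟨u₀, hu₀, hsep⟩ := hsep
      have hα' : α < #A := hα.elim id fun h => h ▸ hne.1.card_pos
      obtain ⟨u, hu, hinj, hcut⟩ := exists_injOn_cutCount_eq hgp hAB hu₀ hsep hα'
        (hβ.elim le_of_lt fun h => h ▸ Nat.zero_le _)
      obtain ⟨x, hxA, hxB⟩ := exists_threshold_cutCount hinj hAB hα'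
      exact ⟨u, hu, x, hxA, hxB.trans hcut⟩
    obtain ⟨u, hu, hinj⟩ := exists_injOn_dot (A.finite_toSet.union B.finite_toSet)
    rcases not_and_or.1 hne with hA | hB
    · rw [Finset.not_nonempty_iff_eq_empty] at hA
      subst hA
      obtain ⟨x, hx⟩ := exists_card_filter_lt_eq (hinj.mono subset_union_right) hβ
      exact ⟨u, hu, x, by simpa [eq_comm] using hα, hx⟩
    · rw [Finset.not_nonempty_iff_eq_empty] at hB
      subst hB
      obtain ⟨x, hx⟩ := exists_card_filter_lt_eq (hinj.mono subset_union_left) hα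
      exact ⟨u, hu, x, hx, by simpa [eq_comm] using hβ⟩
  obtain ⟨s, hs, hiff⟩ := exists_notMem_forall_lt_iff_lt (A ∪ B) (dot u) x
    (bad := dot u '' X ∪ (fun s => lineOf (u, s)) ⁻¹' F)
    ((X.finite_toSet.image _).union (F.finite_toSet.preimage (injective_lineOf hu).injOn))
  refine ⟨(u, s), hu, fun p hp h => hs (Or.inl ⟨p, hp, h⟩), fun h => hs (Or.inr h), ?_, ?_⟩
  · rw [← hxA]
    exact congrArg card (Finset.filter_congr fun a ha => hiff a (Finset.mem_union_left _ ha))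
  · rw [← hxB]
    exact congrArg card (Finset.filter_congr fun b hb => hiff b (Finset.mem_union_right _ hb))


lemma splitsInto_cons_of_card_filter_eq {S : Finset Pt} {H : ℕ} {l : Pt × ℝ}
    (hS : #S ≤ 2 * H) (h : #{q ∈ S | dot l.1 q < l.2} = #S - min #S H) (Lf : List (Pt × ℝ)) :
    SplitsInto (l :: Lf) S H := by
  have := Finset.card_filter_add_card_filter_not (s := S) (p := fun q => dot l.1 q < l.2)
  exact SplitsInto.cons (splitsInto_of_card_le (by omega) _) (splitsInto_of_card_le (by omega) _)

theorem exists_lines_splitsInto {H : ℕ} (hH : 1 ≤ H) {X : Finset Pt} (hgp : GenPos (X : Set Pt))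
    (j : ℕ) : ∀ {C R : Finset Pt}, C ⊆ X → R ⊆ X → Disjoint C R → #C ≤ 2 * H →
      #R ≤ 2 * H * (j + 1) → (∃ u ≠ 0, ∀ c ∈ C, ∀ r ∈ R, dot u c < dot u r) →
      ∀ F : Finset (Set Pt), ∃ Lf : List (Pt × ℝ), Lf.length = j + 1 ∧ (Lf.map lineOf).Nodup ∧
        (∀ l ∈ Lf, l.1 ≠ 0 ∧ (∀ p ∈ X, dot l.1 p ≠ l.2) ∧ lineOf l ∉ F) ∧
        SplitsInto Lf C H ∧ SplitsInto Lf R H := by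
  induction j with
  | zero =>
    intro C R hC hR hCR hCcard hRcard hsep F
    obtain ⟨l, hl0, hlX, hlF, hlC, hlR⟩ := exists_line_cutting (X := X)
      (hgp.mono (union_subset hC hR)) hCR hsep (α := #C - min #C H) (β := #R - min #R H)
      (by omega) (by omega) F
    refine ⟨[l], rfl, List.nodup_singleton _, fun l' hl' => ?_, ?_, ?_⟩
    · rw [List.mem_singleton.1 hl']
      exact ⟨hl0, hlX, hlF⟩
    · exact splitsInto_cons_of_card_filter_eq hCcard hlC []
    · exact splitsInto_cons_of_card_filter_eq (by omega) hlR []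
  | succ j ih =>
    intro C R hC hR hCR hCcard hRcard hsep F
    set M := 2 * H * (j + 1)
    have hM : 1 ≤ M := Nat.one_le_iff_ne_zero.2 (by positivity)
    have hRcard' : #R ≤ M + 2 * H := by simpa [M, mul_add] using hRcard
    obtain ⟨l, hl0, hlX, hlF, hlC, hlR⟩ := exists_line_cutting (X := X)
      (hgp.mono (union_subset hC hR)) hCR hsep (α := #C - min #C H) (β := #R - min #R M)
      (by omega) (by omega) F
    set C' := {q ∈ R | dot l.1 q < l.2}
    set R' := {q ∈ R | ¬ dot l.1 q < l.2}
    have hsplit : #C' + #R' = #R := Finset.card_filter_add_card_filter_not _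
    have hsep' : ∀ c ∈ C', ∀ r ∈ R', dot l.1 c < dot l.1 r := by
      intro c hc r hr
      rw [Finset.mem_filter] at hc hr
      exact hc.2.trans (lt_of_le_of_ne (not_lt.1 hr.2) (hlX r (hR hr.1)).symm)
    obtain ⟨Lf, hlen, hnodup, hLf, hC', hR'⟩ := ih (C := C') (R := R')
      ((Finset.filter_subset _ _).trans hR) ((Finset.filter_subset _ _).trans hR) (Finset.disjoint_filter_filter_not _ _ _)
      (by omega) (by omega) ⟨l.1, hl0, hsep'⟩ (insert (lineOf l) F)
    refine ⟨l :: Lf, by simp [hlen], ?_, ?_, ?_, SplitsInto.cons hC' hR'⟩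
    · refine List.nodup_cons.2 ⟨fun h => ?_, hnodup⟩
      obtain ⟨l', hl', hl'l⟩ := List.mem_map.1 h
      exact (hLf l' hl').2.2 (hl'l ▸ Finset.mem_insert_self _ _)
    · simp only [List.mem_cons, forall_eq_or_imp]
      exact ⟨⟨hl0, hlX, hlF⟩, fun l' hl' =>
        ⟨(hLf l' hl').1, (hLf l' hl').2.1, fun h => (hLf l' hl').2.2 (Finset.mem_insert_of_mem h)⟩⟩
    · exact splitsInto_cons_of_card_filter_eq hCcard hlC Lf

end Lines

end LineArrangement

end

open LineArrangement in
/-- Theorem 2.2. -/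
theorem stmt_1 (X : Finset Pt) (N : ℕ) (hN : X.card = N) (hgp : GenPos ↑X)
    (H K : ℕ) (hH : 1 ≤ H) (hK : ⌈(N : ℝ) / (2 * H)⌉ ≤ (K : ℤ)) :
    ∃ L : Finset (Set Pt), L.card = K ∧
      (∀ l ∈ L, IsAffLine l ∧ Disjoint l (↑X : Set Pt)) ∧
      ∀ cell, IsCell ↑L cell → ((↑X : Set Pt) ∩ cell).ncard ≤ H := by
  have hXK : X.card ≤ 2 * H * K := by
    have h2H : (0 : ℝ) < 2 * H := by
      have : (1 : ℝ) ≤ H := by exact_mod_cast hH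
      linarith
    rw [Int.ceil_le, Int.cast_natCast, div_le_iff₀ h2H] at hK
    rw [hN]
    exact_mod_cast (by linarith : (N : ℝ) ≤ 2 * H * K)
  rcases K with _ | j
  · have hX : X = ∅ := Finset.card_eq_zero.1 (by simpa using hXK)
    exact ⟨∅, rfl, by simp, fun cell _ => by simp [hX]⟩
  obtain ⟨Lf, hlen, hnodup, hLf, -, hsplit⟩ := exists_lines_splitsInto hH hgp j
    (Finset.empty_subset X) subset_rfl (Finset.disjoint_empty_left X) (by simp) hXK
    ⟨(1, 0), by simp, by simp⟩ ∅
  refine ⟨(Lf.map lineOf).toFinset, ?_, ?_, fun cell hcell => ncard_inter_le_of_isCell hsplit hcell⟩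
  · rw [List.toFinset_card_of_nodup hnodup, List.length_map, hlen]
  · simp only [List.mem_toFinset, List.mem_map]
    rintro _ ⟨l, hl, rfl⟩
    obtain ⟨hl0, hlX, -⟩ := hLf l hl
    exact ⟨isAffLine_lineOf hl0, Set.disjoint_left.2 fun p hpl hpX => hlX p hpX hpl⟩
end

section
/- Let X be a finite set of N points in ℝ² in general position and let K ≥ 1 be an integer. Then there exists a set L of K distinct affine lines in ℝ², each disjoint from X, such that every cell of L contains at most ⌈N/(2K)⌉ points of X. -/
open Set

/-!
Put `m = ⌈N / 2K⌉`, so `N ≤ 2Km`, and cut `X` into blocks of at most `2m` points by a chain of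
lines: each line halves the block cut off by its predecessor and at the same time cuts the next
block of `2m` points off the rest, and the last line halves the last two blocks. Then for `K` lines
at most `m` points of `X` lie on the same sides of all lines as a given point, hence in any cell.

Each step needs: if a line separates `A` from `B`, then for all `p ≤ |A|`, `q ≤ |B|` some line has
exactly `p` points of `A` and `q` of `B` on its negative side. Sweep along a direction that turns
from one in which all of `A` comes before `B` to one in which all of `B` comes before `A`, and
count the points of `B` preceded by fewer than `p` points of `A`. The count moves only when the
direction passes a line through two points, and by general position only one point of `B` can
change status there, so by a discrete intermediate value argument the count equals `q` for some
direction; a level line of that sweep is then the required line.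
-/

open scoped Finset

noncomputable section

section Order

variable {α : Type*}

lemma exists_notMem_between (W L U : Finset ℝ) (h : ∀ a ∈ L, ∀ b ∈ U, a < b) :
    ∃ t ∉ W, (∀ a ∈ L, a < t) ∧ ∀ b ∈ U, t < b := by
  set I : Set ℝ := (⋂ a ∈ L, Ioi a) ∩ ⋂ b ∈ U, Iio b
  have hI : IsOpen I :=
    (isOpen_biInter_finset fun _ _ => isOpen_Ioi).inter
      (isOpen_biInter_finset fun _ _ => isOpen_Iio)
  have hne : I.Nonempty := by
    simp only [I, Set.Nonempty, mem_inter_iff, mem_iInter, mem_Ioi, mem_Iio]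
    rcases U.eq_empty_or_nonempty with rfl | hU
    · obtain ⟨M, hM⟩ := L.exists_le
      exact ⟨M + 1, fun a ha => by linarith [hM a ha], by simp⟩
    rcases L.eq_empty_or_nonempty with rfl | hL
    · exact ⟨U.min' hU - 1, by simp, fun b hb => by linarith [U.min'_le b hb]⟩
    obtain ⟨t, hat, htb⟩ := exists_between (h _ (L.max'_mem hL) _ (U.min'_mem hU))
    exact ⟨t, fun a ha => (L.le_max' a ha).trans_lt hat, fun b hb => htb.trans_le (U.min'_le b hb)⟩
  obtain ⟨t, htI, htW⟩ := (W.countable_toSet.dense_compl ℝ).inter_open_nonempty I hI hne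
  simp only [I, mem_inter_iff, mem_iInter, mem_Ioi, mem_Iio] at htI
  exact ⟨t, htW, htI⟩

lemma exists_notMem_forall_lt_iff {f : α → ℝ} {S : Finset α} (hf : InjOn f S) (W : Finset ℝ)
    (P : α → Prop) [DecidablePred P] (hP : ∀ x ∈ S, ∀ y ∈ S, f y < f x → P x → P y) :
    ∃ t ∉ W, ∀ x ∈ S, f x < t ↔ P x := by
  obtain ⟨t, htW, hlo, hhi⟩ := exists_notMem_between W ({x ∈ S | P x}.image f)
    ({x ∈ S | ¬P x}.image f) (by
      simp only [Finset.mem_image, Finset.mem_filter]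
      rintro _ ⟨x, ⟨hx, hPx⟩, rfl⟩ _ ⟨y, ⟨hy, hPy⟩, rfl⟩
      exact lt_of_le_of_ne (not_lt.1 fun hyx => hPy (hP x hx y hy hyx hPx))
        fun hxy => hPy (hf hx hy hxy ▸ hPx))
  refine ⟨t, htW, fun x hx => ⟨fun hxt => ?_, fun hPx => hlo _ ?_⟩⟩
  · by_contra hPx
    exact (hhi _ (Finset.mem_image_of_mem f (Finset.mem_filter.2 ⟨hx, hPx⟩))).not_gt hxt
  · exact Finset.mem_image_of_mem f (Finset.mem_filter.2 ⟨hx, hPx⟩)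

/-- Discrete intermediate value theorem. -/
theorem exists_notMem_eq_of_abs_sub_le_one (g : ℝ → ℤ) (S : Finset ℝ)
    (hg : ∀ u v, u < v → u ∉ S → v ∉ S → #{x ∈ S | x ∈ Ioo u v} ≤ 1 → |g u - g v| ≤ 1)
    {s₁ s₂ : ℝ} (h12 : s₁ < s₂) (h₁ : s₁ ∉ S) (h₂ : s₂ ∉ S) {c : ℤ} (hc : c ∈ uIcc (g s₁) (g s₂)) :
    ∃ s ∉ S, g s = c := by
  induction hn : #{x ∈ S | x ∈ Ioo s₁ s₂} using Nat.strong_induction_on generalizing s₁ s₂ with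
  | _ n ih =>
  rw [mem_uIcc] at hc
  by_cases hn1 : n ≤ 1
  · have := abs_le.1 (hg s₁ s₂ h12 h₁ h₂ (hn ▸ hn1))
    rcases (by omega : c = g s₁ ∨ c = g s₂) with rfl | rfl
    exacts [⟨s₁, h₁, rfl⟩, ⟨s₂, h₂, rfl⟩]
  set T := {x ∈ S | x ∈ Ioo s₁ s₂}
  have hT : 1 < #T := by omega
  have hTne : T.Nonempty := Finset.card_pos.1 (by omega)
  have ha := Finset.mem_filter.1 (T.min'_mem hTne)
  have hb := Finset.mem_filter.1 (T.max'_mem hTne)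
  obtain ⟨v, hvS, hav, hvb⟩ := exists_notMem_between S {T.min' hTne} {T.max' hTne}
    (by simpa using T.min'_lt_max'_of_card hT)
  simp only [Finset.mem_singleton, forall_eq] at hav hvb
  have hfewer : ∀ {u w : ℝ}, s₁ ≤ u → w ≤ s₂ → ∀ z ∈ T, z ∉ Ioo u w →
      #{x ∈ S | x ∈ Ioo u w} < n := by
    intro u w hu hw z hzT hz
    rw [← hn]
    refine Finset.card_lt_card ((Finset.ssubset_iff_of_subset fun x hx => ?_).2 ⟨z, hzT, ?_⟩)
    · obtain ⟨hxS, hxu, hxw⟩ := Finset.mem_filter.1 hx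
      exact Finset.mem_filter.2 ⟨hxS, hu.trans_lt hxu, hxw.trans_le hw⟩
    · exact fun hz' => hz (Finset.mem_filter.1 hz').2
  have hs₁v : s₁ < v := ha.2.1.trans hav
  have hvs₂ : v < s₂ := hvb.trans hb.2.2
  rcases Set.uIcc_subset_uIcc_union_uIcc (b := g v) (mem_uIcc.2 hc) with hc' | hc'
  · exact ih _ (hfewer le_rfl hvs₂.le _ (T.max'_mem hTne) fun h => h.2.not_gt hvb)
      hs₁v h₁ hvS hc' rfl
  · exact ih _ (hfewer hs₁v.le le_rfl _ (T.min'_mem hTne) fun h => h.1.not_gt hav)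
      hvs₂ hvS h₂ hc' rfl

lemma lt_iff_lt_of_forall_ne {f g : ℝ → ℝ} (hf : Continuous f) (hg : Continuous g) {u v : ℝ}
    (huv : u ≤ v) (hne : ∀ s ∈ Icc u v, f s ≠ g s) : f u < g u ↔ f v < g v := by
  have hd : ContinuousOn (fun s => g s - f s) (Icc u v) := (hg.sub hf).continuousOn
  constructor
  · intro hfu
    by_contra hfv
    obtain ⟨s, hs, hs0⟩ := intermediate_value_Icc' huv hd
      (show (0 : ℝ) ∈ Icc (g v - f v) (g u - f u) from ⟨by linarith [not_lt.1 hfv], by linarith⟩)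
    exact hne s hs (by linarith [show g s - f s = 0 from hs0])
  · intro hfv
    by_contra hfu
    obtain ⟨s, hs, hs0⟩ := intermediate_value_Icc huv hd
      (show (0 : ℝ) ∈ Icc (g u - f u) (g v - f v) from ⟨by linarith [not_lt.1 hfu], by linarith⟩)
    exact hne s hs (by linarith [show g s - f s = 0 from hs0])

def numBelow (f : α → ℝ) (A : Finset α) (q : α) : ℕ := #{p ∈ A | f p < f q}

lemma card_filter_numBelow_lt [DecidableEq α] {f : α → ℝ} {A : Finset α} (hf : InjOn f A)
    (n : ℕ) :
    #{x ∈ A | numBelow f A x < n} = min n #A := by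
  induction A using Finset.induction_on_max_value f with
  | empty => simp
  | insert a s ha hmax ih =>
    have hlt : ∀ x ∈ s, f x < f a := fun x hx => (hmax x hx).lt_of_ne fun h =>
      ha (hf (Finset.mem_insert_of_mem hx) (Finset.mem_insert_self a s) h ▸ hx)
    have hbelow_a : numBelow f (insert a s) a = #s := by
      rw [numBelow, Finset.filter_insert, if_neg (lt_irrefl _), Finset.filter_true_of_mem hlt]
    have hbelow : ∀ x ∈ s, numBelow f (insert a s) x = numBelow f s x := fun x hx => by
      rw [numBelow, numBelow, Finset.filter_insert, if_neg (hlt x hx).le.not_gt]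
    rw [Finset.filter_insert, hbelow_a, Finset.filter_congr fun x hx => by rw [hbelow x hx],
      Finset.card_insert_of_notMem ha]
    have ih' := ih (hf.mono (Finset.coe_subset.2 (Finset.subset_insert a s)))
    split_ifs
    · rw [Finset.card_insert_of_notMem fun h' => ha (Finset.mem_filter.1 h').1, ih']
      omega
    · omega

section Compare

variable {f h : α → ℝ} {A : Finset α} {q : α}

lemma numBelow_le_numBelow (hf : ∀ p ∈ A, h p ≠ h q → (f p < f q ↔ h p < h q)) :
    numBelow h A q ≤ numBelow f A q :=
  Finset.card_le_card fun p hp => by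
    obtain ⟨hpA, hpq⟩ := Finset.mem_filter.1 hp
    exact Finset.mem_filter.2 ⟨hpA, (hf p hpA hpq.ne).2 hpq⟩

lemma numBelow_le_numBelow_add [DecidableEq α]
    (hf : ∀ p ∈ A, h p ≠ h q → (f p < f q ↔ h p < h q)) :
    numBelow f A q ≤ numBelow h A q + #{p ∈ A | h p = h q} := by
  refine (Finset.card_le_card fun p hp => ?_).trans (Finset.card_union_le _ _)
  obtain ⟨hpA, hpq⟩ := Finset.mem_filter.1 hp
  by_cases he : h p = h q
  · exact Finset.mem_union_right _ (Finset.mem_filter.2 ⟨hpA, he⟩)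
  · exact Finset.mem_union_left _ (Finset.mem_filter.2 ⟨hpA, (hf p hpA he).1 hpq⟩)

end Compare

/-- A point `q ∈ B` that passes the threshold for `f` but not for `g` is tied by `h` with a point
of `A` and has exactly `n - 1` points of `A` below it for `h`. Two such points would either be tied
with each other, putting three points on a level set of `h`, or differ in that count. -/
lemma card_filter_numBelow_lt_le_succ [DecidableEq α] {f g h : α → ℝ} {A B : Finset α} (n : ℕ)
    (hAB : Disjoint A B)
    (hf : ∀ p ∈ A, ∀ q ∈ B, h p ≠ h q → (f p < f q ↔ h p < h q))
    (hg : ∀ p ∈ A, ∀ q ∈ B, h p ≠ h q → (g p < g q ↔ h p < h q))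
    (h3 : ∀ x ∈ A ∪ B, ∀ y ∈ A ∪ B, ∀ z ∈ A ∪ B, h x = h y → h x = h z → x = y ∨ x = z ∨ y = z) :
    #{q ∈ B | numBelow f A q < n} ≤ #{q ∈ B | numBelow g A q < n} + 1 := by
  have hne : ∀ p ∈ A, ∀ q ∈ B, p ≠ q := fun p hp q hq hpq =>
    Finset.disjoint_left.1 hAB hp (hpq ▸ hq)
  have hties : ∀ q ∈ B, #{p ∈ A | h p = h q} ≤ 1 := fun q hq =>
    Finset.card_le_one.2 fun p hp p' hp' => by
    obtain ⟨hpA, hpq⟩ := Finset.mem_filter.1 hp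
    obtain ⟨hp'A, hp'q⟩ := Finset.mem_filter.1 hp'
    rcases h3 p (Finset.mem_union_left _ hpA) p' (Finset.mem_union_left _ hp'A) q
      (Finset.mem_union_right _ hq) (hpq.trans hp'q.symm) hpq with h | h | h
    exacts [h, absurd h (hne p hpA q hq), absurd h (hne p' hp'A q hq)]
  set F := {q ∈ B | numBelow f A q < n ∧ ¬numBelow g A q < n}
  have hflip : ∀ q ∈ F, q ∈ B ∧ numBelow h A q + 1 = n ∧ ∃ p ∈ A, h p = h q := by
    intro q hq
    obtain ⟨hqB, hfq, hgq⟩ := Finset.mem_filter.1 hq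
    have h₁ := numBelow_le_numBelow fun p hp => hf p hp q hqB
    have h₂ := numBelow_le_numBelow_add fun p hp => hg p hp q hqB
    have h₃ := hties q hqB
    obtain ⟨p, hp⟩ := Finset.card_pos.1 (by omega : 0 < #{p ∈ A | h p = h q})
    exact ⟨hqB, by omega, p, (Finset.mem_filter.1 hp).1, (Finset.mem_filter.1 hp).2⟩
  have hlt : ∀ q ∈ F, ∀ q' ∈ F, ¬h q < h q' := by
    intro q hq q' hq' hqq'
    obtain ⟨-, hnq, p, hpA, hpq⟩ := hflip q hq
    obtain ⟨-, hnq', -⟩ := hflip q' hq'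
    have hsub : insert p {x ∈ A | h x < h q} ⊆ {x ∈ A | h x < h q'} := by
      refine Finset.insert_subset (Finset.mem_filter.2 ⟨hpA, hpq ▸ hqq'⟩) fun x hx => ?_
      obtain ⟨hxA, hxq⟩ := Finset.mem_filter.1 hx
      exact Finset.mem_filter.2 ⟨hxA, hxq.trans hqq'⟩
    have := Finset.card_le_card hsub
    rw [Finset.card_insert_of_notMem fun hp => (Finset.mem_filter.1 hp).2.ne hpq] at this
    simp only [numBelow] at hnq hnq'
    omega
  have hF : #F ≤ 1 := Finset.card_le_one.2 fun q hq q' hq' => by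
    rcases lt_trichotomy (h q) (h q') with hqq' | hqq' | hqq'
    · exact absurd hqq' (hlt q hq q' hq')
    · obtain ⟨hqB, -, p, hpA, hpq⟩ := hflip q hq
      obtain ⟨hq'B, -⟩ := hflip q' hq'
      rcases h3 p (Finset.mem_union_left _ hpA) q (Finset.mem_union_right _ hqB) q'
        (Finset.mem_union_right _ hq'B) hpq (hpq.trans hqq') with h | h | h
      exacts [absurd h (hne p hpA q hqB), absurd h (hne p hpA q' hq'B), h]
    · exact absurd hqq' (hlt q' hq' q hq)
  calc #{q ∈ B | numBelow f A q < n}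
      ≤ #({q ∈ B | numBelow g A q < n} ∪ F) := Finset.card_le_card fun q hq => by
        obtain ⟨hqB, hfq⟩ := Finset.mem_filter.1 hq
        by_cases hgq : numBelow g A q < n
        · exact Finset.mem_union_left _ (Finset.mem_filter.2 ⟨hqB, hgq⟩)
        · exact Finset.mem_union_right _ (Finset.mem_filter.2 ⟨hqB, hfq, hgq⟩)
    _ ≤ #{q ∈ B | numBelow g A q < n} + 1 := (Finset.card_union_le _ _).trans (by omega)

end Order

/-- The line `a x + b y = c`, oriented by the sign of `a x + b y - c`. -/
structure PlaneLine where
  a : ℝ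
  b : ℝ
  c : ℝ
  nondeg : a ≠ 0 ∨ b ≠ 0

namespace PlaneLine

variable (l : PlaneLine) {X A B : Finset Pt} {p q x y z : Pt} {s : ℝ}

def eval (p : Pt) : ℝ := l.a * p.1 + l.b * p.2 - l.c

def toSet : Set Pt := {p | l.eval p = 0}

def Avoids (X : Finset Pt) : Prop := ∀ x ∈ X, l.eval x ≠ 0

def SameSide (x y : Pt) : Prop := 0 < l.eval x * l.eval y

instance : Decidable (l.SameSide x y) := inferInstanceAs (Decidable (0 < _))

def below (S : Finset Pt) : Finset Pt := {p ∈ S | l.eval p < 0}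

def above (S : Finset Pt) : Finset Pt := {p ∈ S | 0 < l.eval p}

def neg : PlaneLine := ⟨-l.a, -l.b, -l.c, by simpa using l.nondeg⟩

@[simp] lemma eval_neg : l.neg.eval p = -l.eval p := by
  simp only [neg, eval]
  ring

lemma isAffLine_toSet : IsAffLine l.toSet :=
  ⟨l.a, l.b, l.c, l.nondeg, by ext p; simp [toSet, eval, sub_eq_zero]⟩

lemma Avoids.disjoint_toSet {l : PlaneLine} (h : l.Avoids X) : Disjoint l.toSet ↑X :=
  Set.disjoint_left.2 fun _ hp hpX => h _ hpX hp

lemma Avoids.mono {l : PlaneLine} {S : Finset Pt} (h : l.Avoids X) (hS : S ⊆ X) : l.Avoids S :=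
  fun x hx => h x (hS hx)

lemma continuous_eval : Continuous l.eval := by
  unfold eval
  fun_prop

lemma collinear_of_forall_eval_eq_zero {s : Set Pt} (hs : ∀ p ∈ s, l.eval p = 0) :
    Collinear ℝ s := by
  have hd : l.a ^ 2 + l.b ^ 2 ≠ 0 := by rcases l.nondeg with h | h <;> positivity
  rw [collinear_iff_exists_forall_eq_smul_vadd]
  refine ⟨(l.a * l.c / (l.a ^ 2 + l.b ^ 2), l.b * l.c / (l.a ^ 2 + l.b ^ 2)), (-l.b, l.a),
    fun p hp => ⟨(-l.b * p.1 + l.a * p.2) / (l.a ^ 2 + l.b ^ 2), ?_⟩⟩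
  have hp' : l.a * p.1 + l.b * p.2 = l.c := sub_eq_zero.1 (hs p hp)
  ext
  · simp only [vadd_eq_add, Prod.fst_add, Prod.smul_fst, smul_eq_mul]
    field_simp
    linear_combination l.a * hp'
  · simp only [vadd_eq_add, Prod.snd_add, Prod.smul_snd, smul_eq_mul]
    field_simp
    linear_combination l.b * hp'

lemma sameSide_of_isPreconnected {S : Set Pt} (hS : IsPreconnected S) (hl : Disjoint S l.toSet)
    (hx : x ∈ S) (hy : y ∈ S) : l.SameSide x y := by
  have hcover : S ⊆ {p | l.eval p < 0} ∪ {p | 0 < l.eval p} := fun p hp =>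
    lt_or_gt_of_ne fun h => Set.disjoint_left.1 hl hp h
  rcases hS.subset_or_subset (isOpen_lt l.continuous_eval continuous_const)
    (isOpen_lt continuous_const l.continuous_eval)
    (Set.disjoint_left.2 fun p h₁ h₂ => lt_asymm (α := ℝ) h₁ h₂) hcover with h | h
  · exact mul_pos_of_neg_of_neg (h hx) (h hy)
  · exact mul_pos (h hx) (h hy)

lemma card_filter_sameSide_le {S : Finset Pt} {m : ℕ} (hneg : #(l.below S) ≤ m)
    (hpos : #(l.above S) ≤ m) : #{y ∈ S | l.SameSide x y} ≤ m := by
  rcases lt_trichotomy (l.eval x) 0 with hx | hx | hx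
  · refine le_trans (Finset.card_le_card fun y hy => ?_) hneg
    obtain ⟨hyS, hy⟩ := Finset.mem_filter.1 hy
    refine Finset.mem_filter.2 ⟨hyS, not_le.1 fun h => ?_⟩
    exact (mul_nonpos_of_nonpos_of_nonneg hx.le h).not_gt hy
  · simp [SameSide, hx]
  · refine le_trans (Finset.card_le_card fun y hy => ?_) hpos
    obtain ⟨hyS, hy⟩ := Finset.mem_filter.1 hy
    refine Finset.mem_filter.2 ⟨hyS, not_le.1 fun h => ?_⟩
    exact (mul_nonpos_of_nonneg_of_nonpos hx.le h).not_gt hy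

lemma below_union_above {S : Finset Pt} (h : l.Avoids S) : l.below S ∪ l.above S = S := by
  ext y
  simp only [below, above, Finset.mem_union, Finset.mem_filter]
  constructor
  · rintro (⟨hy, -⟩ | ⟨hy, -⟩) <;> exact hy
  · intro hy
    exact (lt_or_gt_of_ne (h y hy)).imp (⟨hy, ·⟩) (⟨hy, ·⟩)

lemma card_above {S : Finset Pt} (h : l.Avoids S) : #(l.above S) = #S - #(l.below S) := by
  have := Finset.card_union_of_disjoint (s := l.below S) (t := l.above S)
    (Finset.disjoint_filter.2 fun _ _ h₁ h₂ => lt_asymm h₁ h₂)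
  rw [l.below_union_above h] at this
  omega

def along (p : Pt) : ℝ := -l.b * p.1 + l.a * p.2

lemma eq_of_eval_eq_of_along_eq (h₁ : l.eval p = l.eval q) (h₂ : l.along p = l.along q) :
    p = q := by
  have hd : l.a ^ 2 + l.b ^ 2 ≠ 0 := by rcases l.nondeg with h | h <;> positivity
  simp only [eval, along] at h₁ h₂
  refine Prod.ext (mul_left_cancel₀ hd ?_) (mul_left_cancel₀ hd ?_)
  · linear_combination l.a * h₁ - l.b * h₂
  · linear_combination l.b * h₁ + l.a * h₂

/-- The level sets of `l.tilt s` are parallel lines whose direction turns with `s`; for `s → -∞` the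
order by `l.tilt s` puts the negative side of `l` first, for `s → ∞` the positive side. -/
def tilt (s : ℝ) (p : Pt) : ℝ := l.along p - s * l.eval p

def tiltLine (s t : ℝ) : PlaneLine where
  a := -l.b - s * l.a
  b := l.a - s * l.b
  c := t - s * l.c
  nondeg := by
    by_contra! h
    have hb : l.b * (1 + s ^ 2) = 0 := by linear_combination -h.1 - s * h.2
    have hb0 : l.b = 0 := (mul_eq_zero.1 hb).resolve_right (by positivity)
    rcases l.nondeg with ha | ha
    · exact ha (by linear_combination h.2 + s * hb0)
    · exact ha hb0

@[simp] lemma eval_tiltLine (t : ℝ) : (l.tiltLine s t).eval p = l.tilt s p - t := by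
  simp only [tiltLine, eval, tilt, along]
  ring

lemma continuous_tilt (p : Pt) : Continuous fun s => l.tilt s p := by
  unfold tilt
  fun_prop

/-- The parameter `s` at which `l.tilt s` ties `p` and `q`, provided `l.eval p ≠ l.eval q`. -/
def crossingParam (p q : Pt) : ℝ := (l.along p - l.along q) / (l.eval p - l.eval q)

lemma tilt_sub_tilt (h : l.eval p ≠ l.eval q) :
    l.tilt s p - l.tilt s q = (l.eval p - l.eval q) * (l.crossingParam p q - s) := by
  have : l.eval p - l.eval q ≠ 0 := sub_ne_zero.2 h
  simp only [tilt, crossingParam]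
  field_simp
  ring

lemma tilt_lt_tilt_iff (h : l.eval p < l.eval q) :
    l.tilt s p < l.tilt s q ↔ s < l.crossingParam p q := by
  rw [← sub_neg, l.tilt_sub_tilt h.ne, mul_neg_iff]
  constructor
  · rintro (⟨h', -⟩ | ⟨-, h'⟩)
    · linarith
    · linarith
  · exact fun hs => Or.inr ⟨by linarith, by linarith⟩

def crossings (X : Finset Pt) : Finset ℝ := X.offDiag.image fun pq => l.crossingParam pq.1 pq.2

lemma crossingParam_mem_crossings (hp : p ∈ X) (hq : q ∈ X) (hpq : p ≠ q) :
    l.crossingParam p q ∈ l.crossings X :=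
  Finset.mem_image.2 ⟨(p, q), Finset.mem_offDiag.2 ⟨hp, hq, hpq⟩, rfl⟩

lemma mem_crossings_of_tilt_eq (hp : p ∈ X) (hq : q ∈ X) (hpq : p ≠ q)
    (h : l.tilt s p = l.tilt s q) : s ∈ l.crossings X := by
  by_cases he : l.eval p = l.eval q
  · exact absurd (l.eq_of_eval_eq_of_along_eq he (by simpa [tilt, he] using h)) hpq
  · have := l.tilt_sub_tilt (s := s) he
    rw [h, sub_self, zero_eq_mul] at this
    convert l.crossingParam_mem_crossings hp hq hpq
    linarith [this.resolve_left (sub_ne_zero.2 he)]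

lemma injOn_tilt (hs : s ∉ l.crossings X) : InjOn (l.tilt s) X := fun _ hp _ hq h =>
  by_contra fun hpq => hs (l.mem_crossings_of_tilt_eq hp hq hpq h)

lemma eq_or_eq_of_tilt_eq (hgp : GenPos ↑X) (hx : x ∈ X) (hy : y ∈ X) (hz : z ∈ X)
    (h₁ : l.tilt s x = l.tilt s y) (h₂ : l.tilt s x = l.tilt s z) : x = y ∨ x = z ∨ y = z := by
  by_contra! h
  refine hgp x hx y hy z hz h.1 h.2.1 h.2.2
    ((l.tiltLine s (l.tilt s x)).collinear_of_forall_eval_eq_zero ?_)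
  rintro p (rfl | rfl | rfl) <;> simp [← h₁, ← h₂]

def cutCount (A B : Finset Pt) (n : ℕ) (s : ℝ) : ℕ := #{q ∈ B | numBelow (l.tilt s) A q < n}

lemma abs_cutCount_sub_le_one (hgp : GenPos ↑X) (hA : A ⊆ X) (hB : B ⊆ X) (hAB : Disjoint A B)
    (n : ℕ) {u v : ℝ} (huv : u < v) (hu : u ∉ l.crossings X) (hv : v ∉ l.crossings X)
    (h1 : #{s ∈ l.crossings X | s ∈ Ioo u v} ≤ 1) :
    |(l.cutCount A B n u : ℤ) - l.cutCount A B n v| ≤ 1 := by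
  obtain ⟨s₀, hs₀, hS⟩ : ∃ s₀ ∈ Icc u v, ∀ s ∈ l.crossings X, s ∈ Icc u v → s = s₀ := by
    have hT : ∀ s ∈ l.crossings X, s ∈ Icc u v → s ∈ {s ∈ l.crossings X | s ∈ Ioo u v} :=
      fun s hs hI => Finset.mem_filter.2 ⟨hs, lt_of_le_of_ne hI.1 (by rintro rfl; exact hu hs),
        lt_of_le_of_ne hI.2 (by rintro rfl; exact hv hs)⟩
    rcases Finset.eq_empty_or_nonempty {s ∈ l.crossings X | s ∈ Ioo u v} with h0 | ⟨s₀, hs₀⟩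
    · exact ⟨u, left_mem_Icc.2 huv.le,
        fun s hs hI => absurd (hT s hs hI) (h0 ▸ Finset.notMem_empty s)⟩
    · exact ⟨s₀, Ioo_subset_Icc_self (Finset.mem_filter.1 hs₀).2,
        fun s hs hI => Finset.card_le_one.1 h1 _ (hT s hs hI) _ hs₀⟩
  -- a pair not tied at `s₀` is tied nowhere on `[u, v]`
  have hagree : ∀ w ∈ Icc u v, ∀ p ∈ A, ∀ q ∈ B, l.tilt s₀ p ≠ l.tilt s₀ q →
      (l.tilt w p < l.tilt w q ↔ l.tilt s₀ p < l.tilt s₀ q) := by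
    intro w hw p hp q hq hne
    have hpq : p ≠ q := fun h => Finset.disjoint_left.1 hAB hp (h ▸ hq)
    have hnt : ∀ s ∈ Icc u v, l.tilt s p ≠ l.tilt s q := fun s hs heq =>
      hne (hS s (l.mem_crossings_of_tilt_eq (hA hp) (hB hq) hpq heq) hs ▸ heq)
    rcases le_total w s₀ with hws | hws
    · exact lt_iff_lt_of_forall_ne (l.continuous_tilt p) (l.continuous_tilt q) hws
        fun s hs => hnt s ⟨hw.1.trans hs.1, hs.2.trans hs₀.2⟩
    · exact (lt_iff_lt_of_forall_ne (l.continuous_tilt p) (l.continuous_tilt q) hws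
        fun s hs => hnt s ⟨hs₀.1.trans hs.1, hs.2.trans hw.2⟩).symm
  have h3 : ∀ x ∈ A ∪ B, ∀ y ∈ A ∪ B, ∀ z ∈ A ∪ B, l.tilt s₀ x = l.tilt s₀ y →
      l.tilt s₀ x = l.tilt s₀ z → x = y ∨ x = z ∨ y = z := fun x hx y hy z hz =>
    l.eq_or_eq_of_tilt_eq hgp (Finset.union_subset hA hB hx) (Finset.union_subset hA hB hy)
      (Finset.union_subset hA hB hz)
  have hu' := hagree u (left_mem_Icc.2 huv.le)
  have hv' := hagree v (right_mem_Icc.2 huv.le)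
  have h₁ := card_filter_numBelow_lt_le_succ n hAB hu' hv' h3
  have h₂ := card_filter_numBelow_lt_le_succ n hAB hv' hu' h3
  simp only [cutCount]
  rw [abs_le]
  constructor <;> omega

lemma cutCount_eq_zero (hlt : ∀ p ∈ A, ∀ q ∈ B, l.eval p < l.eval q) {m : ℕ} (hmA : m ≤ #A)
    (hs : ∀ p ∈ A, ∀ q ∈ B, s < l.crossingParam p q) : l.cutCount A B m s = 0 := by
  refine Finset.card_eq_zero.2 (Finset.filter_eq_empty_iff.2 fun q hq => ?_)
  rw [numBelow, Finset.filter_true_of_mem fun p hp =>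
    (l.tilt_lt_tilt_iff (hlt p hp q hq)).2 (hs p hp q hq)]
  omega

lemma cutCount_eq_card (hlt : ∀ p ∈ A, ∀ q ∈ B, l.eval p < l.eval q) {m : ℕ} (hm : 1 ≤ m)
    (hs : ∀ p ∈ A, ∀ q ∈ B, l.crossingParam p q < s) : l.cutCount A B m s = #B := by
  refine congrArg Finset.card (Finset.filter_true_of_mem fun q hq => ?_)
  rw [numBelow, Finset.filter_false_of_mem fun p hp => by
    rw [l.tilt_lt_tilt_iff (hlt p hp q hq)]
    exact (hs p hp q hq).not_gt]
  exact hm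

lemma exists_avoids_card_below_eq_cutCount (hA : A ⊆ X) (hB : B ⊆ X) (hs : s ∉ l.crossings X)
    (m : ℕ) : ∃ g : PlaneLine, g.Avoids X ∧ #(g.below A) = min m #A ∧
      #(g.below B) = l.cutCount A B m s := by
  have hinj : InjOn (l.tilt s) ↑(A ∪ B) :=
    (l.injOn_tilt hs).mono (Finset.coe_subset.2 (Finset.union_subset hA hB))
  obtain ⟨t, htX, ht⟩ := exists_notMem_forall_lt_iff hinj (X.image (l.tilt s))
    (fun x => numBelow (l.tilt s) A x < m) fun x _ y _ hyx hx =>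
      (Finset.card_le_card fun p hp => Finset.mem_filter.2
        ⟨(Finset.mem_filter.1 hp).1, (Finset.mem_filter.1 hp).2.trans hyx⟩).trans_lt hx
  have hbelow : ∀ S ⊆ A ∪ B, (l.tiltLine s t).below S = {x ∈ S | numBelow (l.tilt s) A x < m} :=
    fun S hS => Finset.filter_congr fun x hx => by rw [eval_tiltLine, sub_neg]; exact ht x (hS hx)
  refine ⟨l.tiltLine s t, fun x hx h => htX ?_, ?_, by rw [hbelow B Finset.subset_union_right]; rfl⟩
  · rw [eval_tiltLine, sub_eq_zero] at h
    exact h ▸ Finset.mem_image_of_mem _ hx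
  · rw [hbelow A Finset.subset_union_left,
      card_filter_numBelow_lt (hinj.mono (Finset.coe_subset.2 Finset.subset_union_left))]

theorem exists_avoids_card_below_eq_of_one_le (hgp : GenPos ↑X) (hA : A ⊆ X) (hB : B ⊆ X)
    (hA0 : ∀ p ∈ A, l.eval p < 0) (hB0 : ∀ p ∈ B, 0 < l.eval p) {m n : ℕ} (hm : 1 ≤ m)
    (hmA : m ≤ #A) (hnB : n ≤ #B) :
    ∃ g : PlaneLine, g.Avoids X ∧ #(g.below A) = m ∧ #(g.below B) = n := by
  have hlt : ∀ p ∈ A, ∀ q ∈ B, l.eval p < l.eval q := fun p hp q hq => (hA0 p hp).trans (hB0 q hq)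
  have hAB : Disjoint A B := Finset.disjoint_left.2 fun p hpA hpB => (hlt p hpA p hpB).false
  obtain ⟨M, hM0, hM⟩ : ∃ M : ℝ, 0 < M ∧ ∀ s ∈ l.crossings X, |s| < M :=
    ⟨∑ s ∈ l.crossings X, |s| + 1, by positivity, fun s hs => by
      linarith [Finset.single_le_sum (fun s _ => abs_nonneg s) hs]⟩
  have hout : ∀ s, M ≤ |s| → s ∉ l.crossings X := fun s hs h => (hM s h).not_ge hs
  have hparam : ∀ p ∈ A, ∀ q ∈ B, |l.crossingParam p q| < M := fun p hp q hq =>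
    hM _ (l.crossingParam_mem_crossings (hA hp) (hB hq)
      fun h => (hlt p hp q hq).ne (congrArg l.eval h))
  have hcut₁ := l.cutCount_eq_zero hlt hmA fun p hp q hq => (abs_lt.1 (hparam p hp q hq)).1
  have hcut₂ := l.cutCount_eq_card hlt hm fun p hp q hq => (abs_lt.1 (hparam p hp q hq)).2
  obtain ⟨s, hs, hsn⟩ := exists_notMem_eq_of_abs_sub_le_one (fun s => (l.cutCount A B m s : ℤ))
    (l.crossings X) (fun u v huv hu hv h1 => l.abs_cutCount_sub_le_one hgp hA hB hAB m huv hu hv h1)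
    (neg_lt_self hM0) (hout _ (by rw [abs_neg, abs_of_pos hM0])) (hout _ (abs_of_pos hM0).ge)
    (c := n) (by simp only [hcut₁, hcut₂, mem_uIcc]; omega)
  obtain ⟨g, hg, hgA, hgB⟩ := l.exists_avoids_card_below_eq_cutCount hA hB hs m
  exact ⟨g, hg, hgA.trans (min_eq_left hmA), hgB.trans (by exact_mod_cast hsn)⟩

lemma exists_forall_eval_pos (X : Finset Pt) : ∃ l : PlaneLine, ∀ x ∈ X, 0 < l.eval x :=
  ⟨⟨1, 0, -(∑ x ∈ X, |x.1|) - 1, Or.inl one_ne_zero⟩, fun x hx => by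
    have := Finset.single_le_sum (f := fun x : Pt => |x.1|) (fun _ _ => abs_nonneg _) hx
    simp only [eval]
    linarith [neg_abs_le x.1]⟩

theorem exists_avoids_card_below_eq (hgp : GenPos ↑X) (hA : A ⊆ X) (hB : B ⊆ X)
    (hA0 : ∀ p ∈ A, l.eval p < 0) (hB0 : ∀ p ∈ B, 0 < l.eval p) {m n : ℕ}
    (hmA : m ≤ #A) (hnB : n ≤ #B) :
    ∃ g : PlaneLine, g.Avoids X ∧ #(g.below A) = m ∧ #(g.below B) = n := by
  rcases Nat.eq_zero_or_pos m with rfl | hm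
  · rcases Nat.eq_zero_or_pos n with rfl | hn
    · obtain ⟨g, hg⟩ := exists_forall_eval_pos X
      have hnone : ∀ S ⊆ X, #(g.below S) = 0 := fun S hS =>
        Finset.card_eq_zero.2 (Finset.filter_eq_empty_iff.2 fun x hx => (hg x (hS hx)).not_gt)
      exact ⟨g, fun x hx => (hg x hx).ne', hnone A hA, hnone B hB⟩
    · obtain ⟨g, hg, hgB, hgA⟩ := l.neg.exists_avoids_card_below_eq_of_one_le hgp hB hA
        (by simpa using hB0) (by simpa using hA0) hn hnB (Nat.zero_le _)
      exact ⟨g, hg, hgA, hgB⟩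
  · exact l.exists_avoids_card_below_eq_of_one_le hgp hA hB hA0 hB0 hm hmA hnB

end PlaneLine

def sameSideClass (Ls : List PlaneLine) (S : Finset Pt) (x : Pt) : Finset Pt :=
  {y ∈ S | ∀ l ∈ Ls, l.SameSide x y}

lemma sameSideClass_cons_subset (l : PlaneLine) (Ls : List PlaneLine) (S : Finset Pt) (x : Pt) :
    sameSideClass (l :: Ls) S x ⊆ {y ∈ S | l.SameSide x y} :=
  fun _ hy => Finset.mem_filter.2
    ⟨(Finset.mem_filter.1 hy).1, (Finset.mem_filter.1 hy).2 l List.mem_cons_self⟩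

lemma sameSideClass_cons_union_subset_left {l : PlaneLine} {C R : Finset Pt}
    (hR0 : ∀ p ∈ R, 0 < l.eval p) {x : Pt} (hx : l.eval x < 0) (Ls : List PlaneLine) :
    sameSideClass (l :: Ls) (C ∪ R) x ⊆ sameSideClass Ls C x := by
  intro y hy
  simp only [sameSideClass, Finset.mem_filter, List.forall_mem_cons] at hy ⊢
  obtain ⟨hyCR, hl, hLs⟩ := hy
  exact ⟨(Finset.mem_union.1 hyCR).resolve_right fun hyR =>
    (mul_neg_of_neg_of_pos hx (hR0 y hyR)).not_gt hl, hLs⟩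

lemma sameSideClass_cons_union_subset_right {l : PlaneLine} {C R : Finset Pt}
    (hC0 : ∀ p ∈ C, l.eval p < 0) {x : Pt} (hx : 0 < l.eval x) (Ls : List PlaneLine) :
    sameSideClass (l :: Ls) (C ∪ R) x ⊆ sameSideClass Ls R x := by
  intro y hy
  simp only [sameSideClass, Finset.mem_filter, List.forall_mem_cons] at hy ⊢
  obtain ⟨hyCR, hl, hLs⟩ := hy
  exact ⟨(Finset.mem_union.1 hyCR).resolve_left fun hyC =>
    (mul_neg_of_pos_of_neg hx (hC0 y hyC)).not_gt hl, hLs⟩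

lemma sameSideClass_cons_of_forall_pos {l : PlaneLine} {S : Finset Pt}
    (hS : ∀ y ∈ S, 0 < l.eval y) {x : Pt} (hx : x ∈ S) (Ls : List PlaneLine) :
    sameSideClass (l :: Ls) S x = sameSideClass Ls S x :=
  Finset.filter_congr fun y hy => by
    rw [List.forall_mem_cons, and_iff_right (show l.SameSide x y from mul_pos (hS x hx) (hS y hy))]

/-- `C` is the block cut off by `l₀` that the next line halves, `R` the rest. -/
theorem exists_lines_card_sameSideClass_le {X : Finset Pt} (hgp : GenPos ↑X) (m : ℕ) {k : ℕ}
    (hk : 1 ≤ k) : ∀ {C R : Finset Pt} (l₀ : PlaneLine), C ⊆ X → R ⊆ X →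
      (∀ p ∈ C, l₀.eval p < 0) → (∀ p ∈ R, 0 < l₀.eval p) → #C ≤ 2 * m → #R ≤ 2 * k * m →
      ∃ Ls : List PlaneLine, Ls.length ≤ k ∧ (∀ l ∈ Ls, l.Avoids X) ∧
        ∀ x ∈ C ∪ R, #(sameSideClass (l₀ :: Ls) (C ∪ R) x) ≤ m := by
  have hhalf : ∀ {S : Finset Pt} {g : PlaneLine} (Ls : List PlaneLine), g.Avoids S →
      #S ≤ 2 * m → #(g.below S) = #S / 2 → ∀ x, #(sameSideClass (g :: Ls) S x) ≤ m :=
    fun Ls hg hS hgS x => (Finset.card_le_card (sameSideClass_cons_subset _ Ls _ x)).trans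
      (PlaneLine.card_filter_sameSide_le _ (by omega) (by rw [PlaneLine.card_above _ hg]; omega))
  induction k, hk using Nat.le_induction with
  | base =>
    intro C R l₀ hC hR hC0 hR0 hCm hRm
    obtain ⟨g, hg, hgC, hgR⟩ := l₀.exists_avoids_card_below_eq hgp hC hR hC0 hR0
      (Nat.div_le_self #C 2) (Nat.div_le_self #R 2)
    refine ⟨[g], le_rfl, by simpa using hg, fun x hx => ?_⟩
    rcases Finset.mem_union.1 hx with hx | hx
    · exact (Finset.card_le_card (sameSideClass_cons_union_subset_left hR0 (hC0 x hx) _)).trans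
        (hhalf _ (hg.mono hC) hCm hgC x)
    · exact (Finset.card_le_card (sameSideClass_cons_union_subset_right hC0 (hR0 x hx) _)).trans
        (hhalf _ (hg.mono hR) (by omega) hgR x)
  | succ k hk ih =>
    intro C R l₀ hC hR hC0 hR0 hCm hRm
    obtain ⟨g, hg, hgC, hgR⟩ := l₀.exists_avoids_card_below_eq hgp hC hR hC0 hR0
      (Nat.div_le_self #C 2) (min_le_right (2 * m) #R)
    have hRsplit := g.below_union_above (hg.mono hR)
    have hkm : 2 * (k + 1) * m = 2 * k * m + 2 * m := by ring
    obtain ⟨Ls, hlen, hLs, hcls⟩ := ih (C := g.below R) (R := g.above R) g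
      ((Finset.filter_subset _ _).trans hR) ((Finset.filter_subset _ _).trans hR)
      (fun p hp => (Finset.mem_filter.1 hp).2) (fun p hp => (Finset.mem_filter.1 hp).2)
      (hgR ▸ min_le_left _ _) (by rw [g.card_above (hg.mono hR), hgR]; omega)
    refine ⟨g :: Ls, by simpa using hlen, by simpa using ⟨hg, hLs⟩, fun x hx => ?_⟩
    rcases Finset.mem_union.1 hx with hx | hx
    · exact (Finset.card_le_card (sameSideClass_cons_union_subset_left hR0 (hC0 x hx) _)).trans
        (hhalf _ (hg.mono hC) hCm hgC x)
    · refine (Finset.card_le_card (sameSideClass_cons_union_subset_right hC0 (hR0 x hx) _)).trans ?_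
      rw [← hRsplit] at hx ⊢
      exact hcls x hx

lemma infinite_setOf_isAffLine_disjoint (X : Finset Pt) :
    {l : Set Pt | IsAffLine l ∧ Disjoint l ↑X}.Infinite := by
  let vertical : ℝ → PlaneLine := fun c => ⟨1, 0, c, Or.inl one_ne_zero⟩
  refine Set.infinite_of_injOn_mapsTo (f := fun c => (vertical c).toSet)
    (s := (Prod.fst '' (↑X : Set Pt))ᶜ)
    (fun c _ c' _ h => ?_) (fun c hc => ⟨(vertical c).isAffLine_toSet, ?_⟩)
    (X.finite_toSet.image Prod.fst).infinite_compl
  · have : ((c, 0) : Pt) ∈ (vertical c).toSet := by simp [vertical, PlaneLine.toSet, PlaneLine.eval]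
    rw [show (vertical c).toSet = (vertical c').toSet from h] at this
    simpa [vertical, PlaneLine.toSet, PlaneLine.eval, sub_eq_zero] using this
  · refine PlaneLine.Avoids.disjoint_toSet fun x hx h => hc ⟨x, hx, ?_⟩
    simpa [vertical, PlaneLine.eval, sub_eq_zero] using h

lemma exists_superset_card_eq_of_isAffLine_disjoint (X : Finset Pt) {F : Finset (Set Pt)} {K : ℕ}
    (hF : ∀ l ∈ F, IsAffLine l ∧ Disjoint l ↑X) (hFK : #F ≤ K) :
    ∃ L : Finset (Set Pt), F ⊆ L ∧ #L = K ∧ ∀ l ∈ L, IsAffLine l ∧ Disjoint l ↑X := by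
  obtain ⟨T, hT, hTK⟩ := (infinite_setOf_isAffLine_disjoint X).exists_subset_card_eq K
  obtain ⟨L, hFL, hLT, hL⟩ := Finset.exists_subsuperset_card_eq Finset.subset_union_left hFK
    (hTK ▸ Finset.card_le_card Finset.subset_union_right : K ≤ #(F ∪ T))
  exact ⟨L, hFL, hL, fun l hl => (Finset.mem_union.1 (hLT hl)).elim (hF l) fun h => hT h⟩

lemma inter_connectedComponentIn_subset_sameSideClass {L : Set (Set Pt)} {Ls : List PlaneLine}
    (hLs : ∀ l ∈ Ls, l.toSet ∈ L) (X : Finset Pt) {z x₀ : Pt}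
    (hx₀ : x₀ ∈ connectedComponentIn (⋃₀ L)ᶜ z) :
    ↑X ∩ connectedComponentIn (⋃₀ L)ᶜ z ⊆ ↑(sameSideClass Ls X x₀) := by
  rintro y ⟨hyX, hy⟩
  refine Finset.mem_filter.2 ⟨hyX, fun l hl => l.sameSide_of_isPreconnected
    isPreconnected_connectedComponentIn ?_ hx₀ hy⟩
  exact Set.disjoint_left.2 fun p hp hpl =>
    connectedComponentIn_subset _ _ hp (Set.mem_sUnion_of_mem hpl (hLs l hl))

lemma ncard_inter_connectedComponentIn_le {L : Set (Set Pt)} {Ls : List PlaneLine}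
    (hLs : ∀ l ∈ Ls, l.toSet ∈ L) {X : Finset Pt} {m : ℕ}
    (hcls : ∀ x ∈ X, #(sameSideClass Ls X x) ≤ m) (z : Pt) :
    (↑X ∩ connectedComponentIn (⋃₀ L)ᶜ z).ncard ≤ m := by
  rcases Set.eq_empty_or_nonempty (↑X ∩ connectedComponentIn (⋃₀ L)ᶜ z) with h | ⟨x₀, hx₀X, hx₀⟩
  · simp [h]
  calc (↑X ∩ connectedComponentIn (⋃₀ L)ᶜ z).ncard
      ≤ (↑(sameSideClass Ls X x₀) : Set Pt).ncard := Set.ncard_le_ncard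
        (inter_connectedComponentIn_subset_sameSideClass hLs X hx₀) (Finset.finite_toSet _)
    _ ≤ m := (Set.ncard_coe_finset _).trans_le (hcls x₀ hx₀X)

end

/-- Corollary 2.2.1. -/
theorem stmt_2 (X : Finset Pt) (N : ℕ) (hN : X.card = N) (hgp : GenPos ↑X)
    (K : ℕ) (hK : 1 ≤ K) :
    ∃ L : Finset (Set Pt), L.card = K ∧
      (∀ l ∈ L, IsAffLine l ∧ Disjoint l (↑X : Set Pt)) ∧
      ∀ cell, IsCell ↑L cell →
        ((((↑X : Set Pt) ∩ cell).ncard : ℤ)) ≤ ⌈(N : ℝ) / (2 * K)⌉ := by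
  set m := ⌈(N : ℝ) / (2 * K)⌉₊
  have hNm : #X ≤ 2 * K * m := by
    have := (div_le_iff₀ (by positivity : (0 : ℝ) < 2 * K)).1 (Nat.le_ceil ((N : ℝ) / (2 * K)))
    rw [hN]
    exact_mod_cast (by linarith : (N : ℝ) ≤ 2 * K * m)
  -- the chain starts from a line missing `X`, with an empty first block
  obtain ⟨l₀, hl₀⟩ := PlaneLine.exists_forall_eval_pos X
  obtain ⟨Ls, hlen, hLs, hcls⟩ := exists_lines_card_sameSideClass_le hgp m hK (C := ∅) l₀
    (Finset.empty_subset _) subset_rfl (by simp) hl₀ (by simp) hNm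
  rw [Finset.empty_union] at hcls
  obtain ⟨L, hsub, hcard, hL⟩ := exists_superset_card_eq_of_isAffLine_disjoint X
    (F := (Ls.map PlaneLine.toSet).toFinset)
    (by simpa using fun l hl => ⟨l.isAffLine_toSet, (hLs l hl).disjoint_toSet⟩)
    ((List.toFinset_card_le _).trans (by simpa using hlen))
  refine ⟨L, hcard, hL, ?_⟩
  rintro _ ⟨z, -, rfl⟩
  rw [← Int.natCast_ceil_eq_ceil (by positivity)]
  exact Nat.cast_le.2 (ncard_inter_connectedComponentIn_le
    (fun l hl => hsub (List.mem_toFinset.2 (List.mem_map_of_mem hl)))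
    (fun x hx => sameSideClass_cons_of_forall_pos hl₀ hx Ls ▸ hcls x hx) z)
end

section
/- Let X be a finite set of N points in ℝ², let d ≥ 1 and K ≥ 1 be integers, and let J be a Jordan curve in ℝ² with stabbing number at most d such that X ⊆ J. Then for every set L of K affine lines in ℝ², each disjoint from X, some cell of L contains at least N/(K·d) points of X. -/
open Set

/-!
Parametrize `J` by a `2π`-periodic loop and list the points of `X` in their cyclic order
along `J`, starting right after a point of `J` lying on a line of `L` (if there is no such point,
`J` and hence `X` lie in a single cell). Consecutive points can only lie in different cells if
the arc of `J` between them meets a line, and the last arc does by the choice of the starting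
point, so `X` meets at most as many cells as there are arcs meeting a line. An arc can meet a
line `l` only in its interior, and points of `J ∩ l` interior to different arcs lie in different
components of `J ∩ l`, since the arc endpoints, which are off `l`, separate them on `J`. Hence
at most `d` arcs meet each line, at most `K * d` arcs meet some line, and by pigeonhole some
cell contains at least `N / (K * d)` points of `X`.
-/

open Real

structure IsLoop {α : Type*} [TopologicalSpace α] (g : ℝ → α) : Prop where
  continuous : Continuous g
  eq_iff : ∀ s t, g s = g t ↔ ∃ k : ℤ, s = t + k * (2 * π)

namespace IsLoop

variable {α : Type*} [TopologicalSpace α] {g : ℝ → α}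

theorem add_two_pi (hg : IsLoop g) (s : ℝ) : g (s + 2 * π) = g s :=
  (hg.eq_iff _ _).2 ⟨1, by simp⟩

theorem injOn_Ico (hg : IsLoop g) (a : ℝ) : InjOn g (Ico a (a + 2 * π)) := by
  intro s hs t ht hst
  obtain ⟨k, hk⟩ := (hg.eq_iff s t).1 hst
  have hk1 : (k : ℝ) < 1 :=
    lt_of_mul_lt_mul_right (a := 2 * π) (by linarith [hs.2, ht.1]) (by positivity)
  have hk2 : (-1 : ℝ) < k :=
    lt_of_mul_lt_mul_right (a := 2 * π) (by linarith [hs.1, ht.2]) (by positivity)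
  obtain rfl : k = 0 := by
    have : k < 1 := by exact_mod_cast hk1
    have : -1 < k := by exact_mod_cast hk2
    omega
  simpa using hk

theorem range_eq_image_Ico (hg : IsLoop g) (a : ℝ) : range g = g '' Ico a (a + 2 * π) := by
  refine (image_subset_range _ _).antisymm' ?_
  rintro _ ⟨r, rfl⟩
  have h2π : 0 < 2 * π := by positivity
  refine ⟨toIcoMod h2π a r, toIcoMod_mem_Ico h2π a r, (hg.eq_iff _ _).2 ⟨-toIcoDiv h2π a r, ?_⟩⟩
  rw [← self_sub_toIcoDiv_zsmul, zsmul_eq_mul]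
  push_cast
  ring

theorem mem_or_mem_of_interleaved [T2Space α] (hg : IsLoop g) {Z : Set α}
    (hZ : IsPreconnected Z) (hZg : Z ⊆ range g) {s₁ s₂ s₃ s₄ : ℝ} (h₁₂ : s₁ < s₂)
    (h₂₃ : s₂ < s₃) (h₃₄ : s₃ < s₄) (h₄₁ : s₄ < s₁ + 2 * π) (h₂ : g s₂ ∈ Z)
    (h₄ : g s₄ ∈ Z) : g s₁ ∈ Z ∨ g s₃ ∈ Z := by
  have hcover : Z ⊆ g '' Icc s₁ s₃ ∪ g '' Icc s₃ (s₁ + 2 * π) := by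
    rw [← image_union, Icc_union_Icc_eq_Icc (by linarith) (by linarith)]
    exact hZg.trans ((hg.range_eq_image_Ico s₁).trans_subset (image_mono Ico_subset_Icc_self))
  obtain ⟨z, hz, ⟨r, hr, rfl⟩, ⟨r', hr', hrr'⟩⟩ := isPreconnected_closed_iff.1 hZ _ _
    (isCompact_Icc.image hg.continuous).isClosed (isCompact_Icc.image hg.continuous).isClosed
    hcover ⟨g s₂, h₂, s₂, ⟨h₁₂.le, h₂₃.le⟩, rfl⟩ ⟨g s₄, h₄, s₄, ⟨h₃₄.le, h₄₁.le⟩, rfl⟩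
  rcases hr'.2.lt_or_eq with hlt | rfl
  · have hrr : r = r' :=
      hg.injOn_Ico s₁ ⟨hr.1, by linarith [hr.2]⟩ ⟨by linarith [hr.1, hr.2, hr'.1], hlt⟩ hrr'.symm
    right
    rwa [← le_antisymm hr.2 (hrr ▸ hr'.1)]
  · left
    rwa [← hrr', hg.add_two_pi] at hz

-- `u 0 < ⋯ < u (N - 1)` are the parameters in `[A, A + 2π)` of the points of `X`, and
-- `u N = u 0 + 2π` closes the loop.
theorem exists_enum [DecidableEq α] (hg : IsLoop g) {X : Finset α} (hX : ↑X ⊆ range g)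
    (hne : X.Nonempty) (A : ℝ) :
    ∃ u : ℕ → ℝ, StrictMonoOn u (Iic X.card) ∧ u X.card = u 0 + 2 * π ∧ A ≤ u 0 ∧
      u (X.card - 1) < A + 2 * π ∧ (Finset.range X.card).image (g ∘ u) = X := by
  have hτ : ∀ x ∈ X, ∃ s ∈ Ico A (A + 2 * π), g s = x := by
    rw [hg.range_eq_image_Ico A] at hX
    exact fun x hx => hX hx
  choose! τ hτI hτg using hτ
  set N := X.card
  have hN : 0 < N := hne.card_pos
  have hT : (X.image τ).card = N :=
    Finset.card_image_of_injOn fun x hx y hy h => by rw [← hτg x hx, ← hτg y hy, h]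
  set t := (X.image τ).orderEmbOfFin hT
  have htT : ∀ k, t k ∈ X.image τ := Finset.orderEmbOfFin_mem _ hT
  have htI : ∀ k, t k ∈ Ico A (A + 2 * π) := fun k => by
    obtain ⟨x, hx, hxk⟩ := Finset.mem_image.1 (htT k)
    exact hxk ▸ hτI x hx
  have htX : ∀ k, g (t k) ∈ X := fun k => by
    obtain ⟨x, hx, hxk⟩ := Finset.mem_image.1 (htT k)
    rwa [← hxk, hτg x hx]
  set u : ℕ → ℝ := fun i => if h : i < N then t ⟨i, h⟩ else t ⟨0, hN⟩ + 2 * π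
  have hu : ∀ i (h : i < N), u i = t ⟨i, h⟩ := fun i h => dif_pos h
  refine ⟨u, ?_, by simp [u, hu 0 hN], by simpa [hu 0 hN] using (htI _).1,
    by simpa [hu _ (Nat.sub_lt hN one_pos)] using (htI _).2, ?_⟩
  · intro i hi j hj hij
    rcases (mem_Iic.1 hj).lt_or_eq with hjN | rfl
    · rw [hu i (hij.trans hjN), hu j hjN]
      exact t.strictMono (Fin.mk_lt_mk.2 hij)
    · rw [hu i hij]
      simp only [u, lt_irrefl, dite_false]
      linarith [(htI ⟨i, hij⟩).2, (htI ⟨0, hN⟩).1]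
  · ext x
    simp only [Finset.mem_image, Finset.mem_range, Function.comp_apply]
    constructor
    · rintro ⟨i, hi, rfl⟩
      exact hu i hi ▸ htX _
    · intro hx
      have : τ x ∈ range t := by
        rw [Finset.range_orderEmbOfFin]
        exact Finset.mem_image_of_mem τ hx
      obtain ⟨⟨k, hk⟩, hkx⟩ := this
      exact ⟨k, hk, by rw [hu k hk, hkx, hτg x hx]⟩

end IsLoop

theorem IsJordanCurve.exists_isLoop {J : Set Pt} (hJ : IsJordanCurve J) :
    ∃ g : ℝ → Pt, IsLoop g ∧ range g = J := by
  obtain ⟨f, hfc, hfi, rfl⟩ := hJ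
  set e : ℝ → EuclideanSpace ℝ (Fin 2) :=
    fun t => Complex.orthonormalBasisOneI.repr (Circle.exp t : ℂ)
  have he : range e = Metric.sphere 0 1 := by
    ext p
    refine ⟨?_, fun hp => ?_⟩
    · rintro ⟨t, rfl⟩
      simp [e]
    · let w : Circle := ⟨Complex.orthonormalBasisOneI.repr.symm p,
        mem_sphere_zero_iff_norm.2 (by rw [LinearIsometryEquiv.norm_map]; simpa using hp)⟩
      refine ⟨Complex.arg w, ?_⟩
      simp only [e, Circle.exp_arg]
      exact Complex.orthonormalBasisOneI.repr.apply_symm_apply p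
  have hes : ∀ t, e t ∈ Metric.sphere (0 : EuclideanSpace ℝ (Fin 2)) 1 :=
    fun t => he ▸ mem_range_self t
  refine ⟨f ∘ e, ⟨hfc.comp_continuous (by fun_prop) hes, fun s t => ?_⟩, by rw [range_comp, he]⟩
  rw [← Circle.exp_eq_exp]
  refine ⟨fun h => ?_, fun h => by simp only [Function.comp_apply, e, h]⟩
  exact Circle.coe_injective (Complex.orthonormalBasisOneI.repr.injective (hfi (hes s) (hes t) h))

theorem Finset.card_image_range_succ_le_card_filter_add_one {β : Type*} [DecidableEq β]
    (f : ℕ → β) (P : ℕ → Prop) [DecidablePred P] {m : ℕ}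
    (hstep : ∀ i < m, f i ≠ f (i + 1) → P i) :
    ((range (m + 1)).image f).card ≤ ((range m).filter P).card + 1 := by
  induction m with
  | zero => simp
  | succ m ih =>
    specialize ih fun i hi => hstep i (Nat.lt_succ_of_lt hi)
    rw [range_add_one (n := m + 1), image_insert]
    conv_rhs => rw [range_add_one, filter_insert]
    by_cases hm : P m
    · rw [if_pos hm, card_insert_of_notMem (s := (range m).filter P) (by simp)]
      exact (card_insert_le _ _).trans (Nat.add_le_add_right ih 1)
    · have hfm : f (m + 1) = f m := by_contra fun h => hm (hstep m m.lt_succ_self (Ne.symm h))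
      rwa [if_neg hm, hfm, insert_eq_of_mem (mem_image_of_mem f (self_mem_range_succ m))]

theorem Finset.card_image_range_le_card_filter {β : Type*} [DecidableEq β]
    (f : ℕ → β) (P : ℕ → Prop) [DecidablePred P] {n : ℕ}
    (hstep : ∀ i, i + 1 < n → f i ≠ f (i + 1) → P i) (hlast : P (n - 1)) :
    ((range n).image f).card ≤ ((range n).filter P).card := by
  rcases n with _ | m
  · simp
  · rw [Nat.add_sub_cancel] at hlast
    conv_rhs => rw [range_add_one, filter_insert, if_pos hlast, card_insert_of_notMem (by simp)]
    exact card_image_range_succ_le_card_filter_add_one f P fun i hi => hstep i (by omega)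

theorem CompsLE.card_le {S : Set Pt} {d : ℕ} (hS : CompsLE S d) {ι : Type*} (F : Finset ι)
    (p : ι → Pt) (hp : ∀ i ∈ F, p i ∈ S)
    (hdist : (F : Set ι).Pairwise fun i j =>
      connectedComponentIn S (p i) ≠ connectedComponentIn S (p j)) :
    F.card ≤ d := by
  by_contra! h
  let e : Fin (d + 1) ↪ F := (Fin.castLEEmb h).trans F.equivFin.symm.toEmbedding
  obtain ⟨i, j, hij, heq⟩ := hS (fun k => p (e k)) fun k => hp _ (e k).2
  exact hdist (e i).2 (e j).2 (fun h => hij (e.injective (Subtype.ext h))) heq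

theorem connectedComponentIn_eq_of_image_Icc_subset {α : Type*} [TopologicalSpace α]
    {f : ℝ → α} (hf : Continuous f) {a b : ℝ} (hab : a ≤ b) {U : Set α}
    (hU : f '' Icc a b ⊆ U) : connectedComponentIn U (f a) = connectedComponentIn U (f b) :=
  connectedComponentIn_eq <|
    (isPreconnected_Icc.image f hf.continuousOn).subset_connectedComponentIn
    ⟨a, left_mem_Icc.2 hab, rfl⟩ hU ⟨b, right_mem_Icc.2 hab, rfl⟩

theorem card_image_connectedComponentIn_le_one_of_isPreconnected {α : Type*} [TopologicalSpace α]
    [DecidableEq (Set α)] {S U : Set α} (hS : IsPreconnected S) (hSU : S ⊆ U) {X : Finset α}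
    (hX : ↑X ⊆ S) : (X.image (connectedComponentIn U)).card ≤ 1 := by
  simp only [Finset.card_le_one, Finset.mem_image]
  rintro _ ⟨x, hx, rfl⟩ _ ⟨y, hy, rfl⟩
  exact connectedComponentIn_eq (hS.subset_connectedComponentIn (hX hx) hSU (hX hy))

namespace IsLoop

variable {g : ℝ → Pt} {u : ℕ → ℝ} {N : ℕ}

theorem card_filter_arc_meets_le (hg : IsLoop g) (hu : StrictMonoOn u (Iic N))
    (hper : u N = u 0 + 2 * π) {l : Set Pt} {d : ℕ} (hl : CompsLE (range g ∩ l) d)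
    (hends : ∀ i ≤ N, g (u i) ∉ l) [DecidablePred fun i => ∃ s ∈ Ioo (u i) (u (i + 1)), g s ∈ l] :
    ((Finset.range N).filter fun i => ∃ s ∈ Ioo (u i) (u (i + 1)), g s ∈ l).card ≤ d := by
  set F := (Finset.range N).filter fun i => ∃ s ∈ Ioo (u i) (u (i + 1)), g s ∈ l
  have hF : ∀ i ∈ F, i < N ∧ ∃ s ∈ Ioo (u i) (u (i + 1)), g s ∈ l := fun i hi => by
    simpa [F] using hi
  choose! s hsI hsl using fun i hi => (hF i hi).2
  have hmono : ∀ i j, i ≤ j → j ≤ N → u i ≤ u j := fun i j hij hj =>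
    hu.monotoneOn (mem_Iic.2 (hij.trans hj)) (mem_Iic.2 hj) hij
  have hsep : ∀ i ∈ F, ∀ j ∈ F, i < j → connectedComponentIn (range g ∩ l) (g (s i)) ≠
      connectedComponentIn (range g ∩ l) (g (s j)) := by
    intro i hi j hj hij heq
    have hjN := (hF j hj).1
    set Z := connectedComponentIn (range g ∩ l) (g (s i))
    have hZ : Z ⊆ range g ∩ l := connectedComponentIn_subset _ _
    have hsiZ : g (s i) ∈ Z := mem_connectedComponentIn ⟨mem_range_self _, hsl i hi⟩
    have hsjZ : g (s j) ∈ Z := heq ▸ mem_connectedComponentIn ⟨mem_range_self _, hsl j hj⟩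
    -- on the loop, `u (i + 1)` and `u (j + 1)` separate `s j` from `s i + 2π`
    have h₁₂ : u (i + 1) < s j := (hmono (i + 1) j hij hjN.le).trans_lt (hsI j hj).1
    have h₃₄ : u (j + 1) < s i + 2 * π := by
      linarith [hmono (j + 1) N hjN le_rfl, hmono 0 i i.zero_le (hij.trans hjN).le, (hsI i hi).1]
    rcases hg.mem_or_mem_of_interleaved isPreconnected_connectedComponentIn
      (hZ.trans inter_subset_left) h₁₂ (hsI j hj).2 h₃₄ (by linarith [(hsI i hi).2]) hsjZ
      ((hg.add_two_pi _).symm ▸ hsiZ) with h | h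
    · exact hends (i + 1) (hij.trans hjN) (hZ h).2
    · exact hends (j + 1) hjN (hZ h).2
  refine hl.card_le F (g ∘ s) (fun i hi => ⟨mem_range_self _, hsl i hi⟩) fun i hi j hj hij => ?_
  rcases hij.lt_or_gt with h | h
  · exact hsep i hi j hj h
  · exact (hsep j hj i hi h).symm

theorem card_filter_arc_meets_sUnion_le (hg : IsLoop g) (hu : StrictMonoOn u (Iic N))
    (hper : u N = u 0 + 2 * π) {L : Finset (Set Pt)} {d : ℕ}
    (hstab : ∀ l ∈ L, CompsLE (range g ∩ l) d) (hends : ∀ i ≤ N, ∀ l ∈ L, g (u i) ∉ l)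
    [DecidablePred fun i => ∃ s ∈ Icc (u i) (u (i + 1)), g s ∈ ⋃₀ ↑L] :
    ((Finset.range N).filter fun i => ∃ s ∈ Icc (u i) (u (i + 1)), g s ∈ ⋃₀ ↑L).card ≤
      L.card * d := by
  classical
  have hcover : (Finset.range N).filter (fun i => ∃ s ∈ Icc (u i) (u (i + 1)), g s ∈ ⋃₀ ↑L) ⊆
      L.biUnion fun l => (Finset.range N).filter fun i => ∃ s ∈ Ioo (u i) (u (i + 1)), g s ∈ l := by
    intro i hi
    simp only [Finset.mem_filter, Finset.mem_range, Finset.mem_biUnion] at hi ⊢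
    obtain ⟨hiN, s, hs, l, hl, hsl⟩ := hi
    refine ⟨l, hl, hiN, s, ⟨hs.1.lt_of_ne ?_, hs.2.lt_of_ne ?_⟩, hsl⟩
    · rintro rfl; exact hends i hiN.le l hl hsl
    · rintro rfl; exact hends (i + 1) hiN l hl hsl
  calc _ ≤ _ := Finset.card_le_card hcover
    _ ≤ ∑ l ∈ L, ((Finset.range N).filter fun i => ∃ s ∈ Ioo (u i) (u (i + 1)), g s ∈ l).card :=
        Finset.card_biUnion_le
    _ ≤ ∑ _l ∈ L, d := Finset.sum_le_sum fun l hl =>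
        hg.card_filter_arc_meets_le hu hper (hstab l hl) fun i hi => hends i hi l hl
    _ = L.card * d := by simp

theorem card_image_connectedComponentIn_le [DecidableEq (Set Pt)] (hg : IsLoop g)
    {X : Finset Pt} (hX : ↑X ⊆ range g) {L : Finset (Set Pt)} {d : ℕ}
    (hstab : ∀ l ∈ L, CompsLE (range g ∩ l) d) (hdisj : ∀ l ∈ L, Disjoint l ↑X) {A : ℝ}
    (hA : g A ∈ ⋃₀ ↑L) : (X.image (connectedComponentIn (⋃₀ ↑L)ᶜ)).card ≤ L.card * d := by
  classical
  rcases X.eq_empty_or_nonempty with rfl | hne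
  · simp
  obtain ⟨u, hu, hper, hA0, hAlast, hXu⟩ := hg.exists_enum hX hne A
  set N := X.card
  have hN : 0 < N := hne.card_pos
  have hends : ∀ i ≤ N, g (u i) ∈ X := by
    intro i hi
    rcases hi.lt_or_eq with hi | rfl
    · exact hXu ▸ Finset.mem_image_of_mem (g ∘ u) (Finset.mem_range.2 hi)
    · rw [hper, hg.add_two_pi]
      exact hXu ▸ Finset.mem_image_of_mem (g ∘ u) (Finset.mem_range.2 hN)
  have hstep : ∀ i, i + 1 < N →
      connectedComponentIn (⋃₀ ↑L)ᶜ (g (u i)) ≠ connectedComponentIn (⋃₀ ↑L)ᶜ (g (u (i + 1))) →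
      ∃ s ∈ Icc (u i) (u (i + 1)), g s ∈ ⋃₀ ↑L := by
    intro i hi hne
    by_contra! hmiss
    exact hne (connectedComponentIn_eq_of_image_Icc_subset hg.continuous
      (hu.monotoneOn (mem_Iic.2 (by omega)) (mem_Iic.2 hi.le) i.le_succ)
      (by rintro _ ⟨s, hs, rfl⟩; exact hmiss s hs))
  have hlast : ∃ s ∈ Icc (u (N - 1)) (u (N - 1 + 1)), g s ∈ ⋃₀ ↑L :=
    ⟨A + 2 * π, ⟨hAlast.le, by rw [Nat.sub_add_cancel hN, hper]; linarith⟩,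
      (hg.add_two_pi A).symm ▸ hA⟩
  calc (X.image (connectedComponentIn (⋃₀ ↑L)ᶜ)).card
      = ((Finset.range N).image fun i => connectedComponentIn (⋃₀ ↑L)ᶜ (g (u i))).card := by
        rw [← hXu, Finset.image_image]; rfl
    _ ≤ _ := Finset.card_image_range_le_card_filter _ _ hstep hlast
    _ ≤ L.card * d := hg.card_filter_arc_meets_sUnion_le hu hper hstab
        fun i hi l hl hil => (hdisj l hl).notMem_of_mem_left hil (hends i hi)

end IsLoop

theorem IsAffLine.finite_setOf_mem_parabola {l : Set Pt} (hl : IsAffLine l) :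
    {t : ℝ | (t, t ^ 2) ∈ l}.Finite := by
  obtain ⟨a, b, c, hab, rfl⟩ := hl
  open Polynomial in
  have hp : C b * X ^ 2 + C a * X - C c ≠ 0 := by
    intro h
    have h₀ := congrArg (eval 0) h
    have h₁ := congrArg (eval 1) h
    have h₂ := congrArg (eval (-1)) h
    simp only [eval_sub, eval_add, eval_mul, eval_pow, eval_C, eval_X, eval_zero] at h₀ h₁ h₂
    rcases hab with ha | hb
    · exact ha (by linarith)
    · exact hb (by linarith)
  refine (Polynomial.finite_setOfPred_isRoot hp).subset fun t ht => ?_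
  have ht' : a * t + b * t ^ 2 = c := ht
  change Polynomial.eval t _ = 0
  simp only [Polynomial.eval_sub, Polynomial.eval_add, Polynomial.eval_mul,
    Polynomial.eval_pow, Polynomial.eval_C, Polynomial.eval_X]
  linarith

theorem exists_notMem_sUnion_of_isAffLine (L : Finset (Set Pt)) (hL : ∀ l ∈ L, IsAffLine l) :
    ∃ p : Pt, p ∉ ⋃₀ (↑L : Set (Set Pt)) := by
  obtain ⟨t, ht⟩ := (L.finite_toSet.biUnion fun l hl =>
    (hL l hl).finite_setOf_mem_parabola).infinite_compl.nonempty
  exact ⟨(t, t ^ 2), fun ⟨l, hl, hp⟩ => ht (mem_biUnion hl hp)⟩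

theorem exists_isCell_div_le_ncard [DecidableEq (Set Pt)] (L : Finset (Set Pt))
    (hL : ∀ l ∈ L, IsAffLine l) (X : Finset Pt) (hX : ∀ l ∈ L, Disjoint l ↑X) {m : ℝ}
    (hm : 0 < m) (hcells : ((X.image (connectedComponentIn (⋃₀ ↑L)ᶜ)).card : ℝ) ≤ m) :
    ∃ cell, IsCell ↑L cell ∧ (X.card : ℝ) / m ≤ ((↑X ∩ cell).ncard : ℝ) := by
  classical
  rcases X.eq_empty_or_nonempty with rfl | hne
  · obtain ⟨p, hp⟩ := exists_notMem_sUnion_of_isAffLine L hL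
    exact ⟨_, ⟨p, hp, rfl⟩, by simp⟩
  have hoff : ∀ x ∈ X, x ∈ (⋃₀ (↑L : Set (Set Pt)))ᶜ := fun x hx ⟨l, hl, hxl⟩ =>
    (hX l hl).notMem_of_mem_left hxl hx
  obtain ⟨_, hc, hfib⟩ := Finset.exists_le_card_fiber_of_nsmul_le_card_of_maps_to
    (fun x hx => Finset.mem_image_of_mem (connectedComponentIn (⋃₀ ↑L)ᶜ) hx) (hne.image _)
    (b := (X.card : ℝ) / m) (by
      rw [nsmul_eq_mul]
      calc _ ≤ m * ((X.card : ℝ) / m) := by gcongr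
        _ = X.card := mul_div_cancel₀ _ hm.ne')
  obtain ⟨x, hx, rfl⟩ := Finset.mem_image.1 hc
  refine ⟨_, ⟨x, hoff x hx, rfl⟩, hfib.trans ?_⟩
  rw [← Set.ncard_coe_finset]
  refine Nat.cast_le.2 (Set.ncard_le_ncard (fun y hy => ?_) (X.finite_toSet.inter_of_left _))
  obtain ⟨hyX, hyc⟩ := Finset.mem_filter.1 hy
  exact ⟨hyX, hyc ▸ mem_connectedComponentIn (hoff y hyX)⟩

/-- Lemma 3.1. -/
theorem stmt_5 (X : Finset Pt) (N : ℕ) (hN : X.card = N) (d K : ℕ)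
    (hd : 1 ≤ d) (hK : 1 ≤ K) (J : Set Pt) (hJ : IsJordanCurve J)
    (hstab : StabLE J d) (hXJ : (↑X : Set Pt) ⊆ J)
    (L : Finset (Set Pt)) (hL : L.card = K)
    (hlines : ∀ l ∈ L, IsAffLine l ∧ Disjoint l (↑X : Set Pt)) :
    ∃ cell, IsCell ↑L cell ∧
      (N : ℝ) / (K * d) ≤ ((((↑X : Set Pt) ∩ cell).ncard : ℝ)) := by
  classical
  obtain ⟨g, hg, rfl⟩ := hJ.exists_isLoop
  have hcells : ((X.image (connectedComponentIn (⋃₀ ↑L)ᶜ)).card : ℝ) ≤ K * d := by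
    rcases (range g ∩ ⋃₀ ↑L).eq_empty_or_nonempty with hmiss | ⟨_, ⟨A, rfl⟩, hA⟩
    · have h₁ := card_image_connectedComponentIn_le_one_of_isPreconnected
        (isPreconnected_range hg.continuous)
        (fun x hx hxL => hmiss.subset ⟨hx, hxL⟩) hXJ
      have h₂ : 1 ≤ K * d := Nat.one_le_iff_ne_zero.2 (by positivity)
      exact_mod_cast h₁.trans h₂
    · rw [← hL]
      exact_mod_cast hg.card_image_connectedComponentIn_le hXJ
        (fun l hl => hstab l (hlines l hl).1) (fun l hl => (hlines l hl).2) hA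
  rw [← hN]
  exact exists_isCell_div_le_ncard L (fun l hl => (hlines l hl).1) X (fun l hl => (hlines l hl).2)
    (by positivity) hcells
end

section
/- Let X be a finite set of points in ℝ², let Y ⊆ X, let d ≥ 1 and K ≥ 1 be integers, and suppose Y is contained in a Jordan curve with stabbing number at most d. Then for every set L of K affine lines in ℝ², each disjoint from X, some cell of L contains at least |Y|/(K·d) points of X. -/
open Set

/-!
Pick one point of `Y` in each cell it meets and list these points in their cyclic order along
`J`. Consecutive points lie in different cells, so the arc of `J` between them crosses a line of
`L`. If there were more than `K * d` such arcs, some line `ℓ` would be crossed by `d + 1` of them.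
Since `J` is homeomorphic to a circle and `ℓ` avoids the listed points, a connected piece of
`J ∩ ℓ` stays inside one arc; so the `d + 1` crossings lie in distinct components of `J ∩ ℓ`,
contradicting the stabbing number. Hence `Y` meets at most `K * d` cells, and by pigeonhole one
of them contains at least `|Y| / (K * d)` points.
-/

theorem exists_mem_Ioo_notMem_of_connectedComponentIn_ne {Z : Type*} [TopologicalSpace Z]
    {Ω : Set Z} {f : ℝ → Z} {a b : ℝ} (hab : a ≤ b) (hf : ContinuousOn f (Icc a b))
    (ha : f a ∈ Ω) (hb : f b ∈ Ω)
    (h : connectedComponentIn Ω (f a) ≠ connectedComponentIn Ω (f b)) :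
    ∃ s ∈ Ioo a b, f s ∉ Ω := by
  by_contra! hΩ
  have hsub : f '' Icc a b ⊆ Ω := by
    rintro _ ⟨s, hs, rfl⟩
    rcases eq_endpoints_or_mem_Ioo_of_mem_Icc hs with rfl | rfl | hs
    exacts [ha, hb, hΩ s hs]
  refine h (connectedComponentIn_eq ?_)
  exact (isPreconnected_Icc.image f hf).subset_connectedComponentIn
    (mem_image_of_mem f (left_mem_Icc.2 hab)) hsub (mem_image_of_mem f (right_mem_Icc.2 hab))

theorem exists_le_ncard_inter_connectedComponentIn {Z : Type*} [TopologicalSpace Z]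
    {X Y : Finset Z} (hYX : Y ⊆ X) {Ω : Set Z} (hXΩ : (X : Set Z) ⊆ Ω)
    (hY : Y.Nonempty) {b : ℝ} (hb : (Y.image (connectedComponentIn Ω)).card • b ≤ Y.card) :
    ∃ y ∈ Y, b ≤ ((X : Set Z) ∩ connectedComponentIn Ω y).ncard := by
  obtain ⟨c, hcT, hc⟩ := Finset.exists_le_card_fiber_of_nsmul_le_card_of_maps_to
    (fun y hy => Finset.mem_image_of_mem _ hy) (hY.image _) hb
  obtain ⟨y, hy, rfl⟩ := Finset.mem_image.1 hcT
  refine ⟨y, hy, hc.trans ?_⟩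
  rw [← Set.ncard_coe_finset, Nat.cast_le]
  refine Set.ncard_le_ncard (fun x hx => ?_) (X.finite_toSet.inter_of_left _)
  simp only [Finset.coe_filter, mem_ofPred_eq] at hx
  exact ⟨hYX hx.1, hx.2 ▸ mem_connectedComponentIn (hXΩ (hYX hx.1))⟩

theorem AddCircle.coe_mem_of_isPreconnected {p : ℝ} [Fact (0 < p)] {B : Set (AddCircle p)}
    (hB : IsPreconnected B) {β s₁ τ s₂ : ℝ} (hβ : (β : AddCircle p) ∉ B)
    (h₁ : β < s₁) (hτ : τ ∈ Icc s₁ s₂) (h₂ : s₂ < β + p)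
    (hs₁ : (s₁ : AddCircle p) ∈ B) (hs₂ : (s₂ : AddCircle p) ∈ B) : (τ : AddCircle p) ∈ B := by
  let φ := AddCircle.openPartialHomeomorphCoe p β
  have hBt : B ⊆ φ.target := fun z hz (h : z = β) => hβ (h ▸ hz)
  have hsymm {s : ℝ} (h : s ∈ Ioo β (β + p)) : φ.symm s = s := φ.left_inv h
  have hI : (φ.symm '' B).OrdConnected := (hB.image _ (φ.continuousOn_symm.mono hBt)).ordConnected
  have hs₁' : s₁ ∈ φ.symm '' B := ⟨_, hs₁, hsymm ⟨h₁, by linarith [hτ.1, hτ.2]⟩⟩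
  have hs₂' : s₂ ∈ φ.symm '' B := ⟨_, hs₂, hsymm ⟨by linarith [hτ.1, hτ.2], h₂⟩⟩
  obtain ⟨z, hz, hzτ⟩ := hI.out hs₁' hs₂' hτ
  rwa [← hzτ, show ((φ.symm z : ℝ) : AddCircle p) = φ (φ.symm z) from rfl, φ.right_inv (hBt hz)]

theorem AddCircle.exists_cyclic_monotone_lift {p : ℝ} [Fact (0 < p)] (S : Finset (AddCircle p))
    (hS : 2 ≤ S.card) :
    ∃ t : ℕ → ℝ, Monotone t ∧ t S.card ≤ t 0 + p ∧ (∀ k, (t k : AddCircle p) ∈ S) ∧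
      ∀ k < S.card, (t k : AddCircle p) ≠ t (k + 1) := by
  set N := S.card
  let Θ := S.image fun z => (equivIco p 0 z : ℝ)
  have hΘ : Θ.card = N :=
    Finset.card_image_of_injective _ (Subtype.val_injective.comp (equivIco p 0).injective)
  let e := Θ.orderEmbOfFin hΘ
  have he (i : Fin N) : e i ∈ Ico 0 (0 + p) ∧ (e i : AddCircle p) ∈ S := by
    obtain ⟨z, hz, hze⟩ := Finset.mem_image.1 (Θ.orderEmbOfFin_mem hΘ i)
    exact hze ▸ ⟨(equivIco p 0 z).2, by rwa [coe_equivIco]⟩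
  have he_inj {i j : Fin N} (h : (e i : AddCircle p) = e j) : i = j :=
    e.injective ((coe_eq_coe_iff_of_mem_Ico (he i).1 (he j).1).1 h)
  let t : ℕ → ℝ := fun k => if h : k < N then e ⟨k, h⟩ else e ⟨0, by omega⟩ + p
  have ht_lt {k : ℕ} (h : k < N) : t k = e ⟨k, h⟩ := dif_pos h
  have ht_ge {k : ℕ} (h : N ≤ k) : t k = e ⟨0, by omega⟩ + p := dif_neg (by omega)
  refine ⟨t, monotone_nat_of_le_succ fun k => ?_, ?_, fun k => ?_, fun k hk => ?_⟩
  · rcases lt_trichotomy (k + 1) N with h | h | h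
    · rw [ht_lt h, ht_lt (by omega : k < N)]
      exact e.monotone (Fin.mk_le_mk.2 (Nat.le_succ k))
    · rw [ht_lt (by omega : k < N), ht_ge h.ge]
      linarith [(he ⟨k, by omega⟩).1.2, (he ⟨0, by omega⟩).1.1]
    · rw [ht_ge h.le, ht_ge (by omega : N ≤ k)]
  · rw [ht_ge le_rfl, ht_lt (by omega : 0 < N)]
  · by_cases h : k < N
    · exact ht_lt h ▸ (he _).2
    · rw [ht_ge (not_lt.1 h), coe_add_period]
      exact (he _).2
  · rw [ht_lt hk]
    rcases (Nat.succ_le_of_lt hk).lt_or_eq with h | h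
    · rw [ht_lt h]
      exact fun h' => absurd (Fin.mk.inj_iff.1 (he_inj h')) (by omega)
    · rw [ht_ge h.ge, coe_add_period]
      exact fun h' => absurd (Fin.mk.inj_iff.1 (he_inj h')) (by omega)

theorem connectedComponentIn_range_inter_ne {Z : Type*} [TopologicalSpace Z] [T2Space Z]
    {p : ℝ} [Fact (0 < p)] {γ : AddCircle p → Z} (hγc : Continuous γ) (hγi : Function.Injective γ)
    {F : Set Z} {t : ℕ → ℝ} {N : ℕ} (ht : Monotone t) (htN : t N ≤ t 0 + p)
    (hF : ∀ k < N, γ (t k) ∉ F) {i j : ℕ} (hij : i < j) (hjN : j < N) {s₁ s₂ : ℝ}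
    (hs₁ : s₁ ∈ Ioo (t i) (t (i + 1))) (hs₂ : s₂ ∈ Ioo (t j) (t (j + 1))) (hs₁F : γ s₁ ∈ F) :
    connectedComponentIn (range γ ∩ F) (γ s₁) ≠ connectedComponentIn (range γ ∩ F) (γ s₂) := by
  intro h
  set C := connectedComponentIn (range γ ∩ F) (γ s₁)
  have hCF : C ⊆ range γ ∩ F := connectedComponentIn_subset _ _
  have hs₁C : γ s₁ ∈ C := mem_connectedComponentIn ⟨mem_range_self _, hs₁F⟩
  have hs₂C : γ s₂ ∈ C := by
    rw [h]
    refine mem_connectedComponentIn ⟨mem_range_self _, ?_⟩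
    by_contra hs₂F
    rw [h, connectedComponentIn_eq_empty fun h' => hs₂F h'.2] at hs₁C
    exact hs₁C
  have hB : IsPreconnected (γ ⁻¹' C) := isPreconnected_connectedComponentIn.preimage_of_isClosedMap
    hγi hγc.isClosedMap fun z hz => (hCF hz).1
  have hτ : t (i + 1) ∈ Icc s₁ s₂ := ⟨hs₁.2.le, (ht hij).trans_lt hs₂.1 |>.le⟩
  have hs₂p : s₂ < t i + p := calc
    s₂ < t (j + 1) := hs₂.2
    _ ≤ t N := ht hjN
    _ ≤ t 0 + p := htN
    _ ≤ t i + p := by gcongr; exact ht (Nat.zero_le i)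
  exact hF (i + 1) (by omega) (hCF (AddCircle.coe_mem_of_isPreconnected hB
    (fun h' => hF i (by omega) (hCF h').2) hs₁.1 hτ hs₂p hs₁C hs₂C)).2

open Real in
theorem IsJordanCurve.exists_addCircle {J : Set Pt} (hJ : IsJordanCurve J) :
    ∃ γ : AddCircle (2 * π) → Pt, Continuous γ ∧ Function.Injective γ ∧ range γ = J := by
  obtain ⟨f, hfc, hfi, rfl⟩ := hJ
  let R := Complex.orthonormalBasisOneI.repr
  let e : AddCircle (2 * π) → EuclideanSpace ℝ (Fin 2) :=
    fun z => R (AddCircle.homeomorphCircle' z)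
  have he_range : range e = Metric.sphere 0 1 := by
    ext v
    refine ⟨?_, fun hv => ?_⟩
    · rintro ⟨z, rfl⟩
      simp [e, R, Circle.norm_coe]
    · let c : Circle := ⟨R.symm v, show R.symm v ∈ Metric.sphere 0 1 by simpa using hv⟩
      refine ⟨AddCircle.homeomorphCircle'.symm c, ?_⟩
      simp only [e, Homeomorph.apply_symm_apply]
      exact R.apply_symm_apply v
  have he_sphere (z) : e z ∈ Metric.sphere 0 1 := he_range ▸ mem_range_self z
  refine ⟨f ∘ e, hfc.comp_continuous (by fun_prop) he_sphere, ?_, by rw [range_comp, he_range]⟩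
  intro z w h
  exact AddCircle.homeomorphCircle'.injective (Circle.coe_injective
    (R.injective (hfi (he_sphere z) (he_sphere w) h)))

theorem IsAffLine.isClosed {l : Set Pt} (hl : IsAffLine l) : IsClosed l := by
  obtain ⟨a, b, c, -, rfl⟩ := hl
  exact isClosed_eq (by fun_prop) continuous_const

theorem IsAffLine.interior_eq_empty {l : Set Pt} (hl : IsAffLine l) : interior l = ∅ := by
  obtain ⟨a, b, c, hab, rfl⟩ := hl
  let φ : Pt →ₗ[ℝ] ℝ := a • LinearMap.fst ℝ ℝ ℝ + b • LinearMap.snd ℝ ℝ ℝ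
  have hφ : Function.Surjective φ := by
    intro y
    rcases hab with ha | hb
    · exact ⟨(y / a, 0), by simp [φ, mul_div_cancel₀ y ha]⟩
    · exact ⟨(0, y / b), by simp [φ, mul_div_cancel₀ y hb]⟩
  have := (φ.isOpenMap_of_finiteDimensional hφ).preimage_interior_eq_interior_preimage
    φ.continuous_of_finiteDimensional {c}
  rw [interior_singleton, preimage_empty] at this
  exact this.symm

theorem exists_notMem_sUnion_of_isAffLine_s7 {L : Set (Set Pt)} (hL : L.Countable)
    (h : ∀ l ∈ L, IsAffLine l) : ((⋃₀ L)ᶜ).Nonempty := by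
  rw [nonempty_compl]
  intro hcover
  have : Countable L := hL.to_subtype
  rw [sUnion_eq_iUnion] at hcover
  obtain ⟨⟨l, hl⟩, hint⟩ :=
    nonempty_interior_of_iUnion_of_closed (fun l : L => (h l l.2).isClosed) hcover
  exact hint.ne_empty (h l hl).interior_eq_empty

theorem card_le_card_mul_of_stabLE {p : ℝ} [Fact (0 < p)] {γ : AddCircle p → Pt}
    (hγc : Continuous γ) (hγi : Function.Injective γ) {d : ℕ} (hstab : StabLE (range γ) d)
    {L : Finset (Set Pt)} (hL : ∀ l ∈ L, IsAffLine l) {S : Finset (AddCircle p)}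
    (hSL : ∀ z ∈ S, γ z ∈ (⋃₀ (L : Set (Set Pt)))ᶜ)
    (hS : InjOn (fun z => connectedComponentIn (⋃₀ (L : Set (Set Pt)))ᶜ (γ z)) S)
    (hS2 : 2 ≤ S.card) : S.card ≤ L.card * d := by
  set N := S.card
  obtain ⟨t, ht, htN, htS, ht_ne⟩ := AddCircle.exists_cyclic_monotone_lift S hS2
  have hcross (k : ℕ) : ∃ s l, k < N → s ∈ Ioo (t k) (t (k + 1)) ∧ l ∈ L ∧ γ s ∈ l := by
    by_cases hk : k < N
    · obtain ⟨s, hs, hsΩ⟩ := exists_mem_Ioo_notMem_of_connectedComponentIn_ne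
        (f := fun s : ℝ => γ s) (ht k.le_succ) (by fun_prop) (hSL _ (htS k)) (hSL _ (htS (k + 1)))
        fun h => ht_ne k hk (hS (htS k) (htS (k + 1)) h)
      obtain ⟨l, hl, hsl⟩ := not_notMem.1 hsΩ
      exact ⟨s, l, fun _ => ⟨hs, hl, hsl⟩⟩
    · exact ⟨0, ∅, fun h => absurd h hk⟩
  choose s l hsl using hcross
  by_contra! hN
  obtain ⟨l₀, hl₀, hfiber⟩ := Finset.exists_lt_card_fiber_of_mul_lt_card_of_maps_to
    (s := Finset.range N) (fun k hk => (hsl k (Finset.mem_range.1 hk)).2.1)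
    (by rwa [Finset.card_range])
  set G := (Finset.range N).filter (fun k => l k = l₀)
  let f : Fin (d + 1) → ℕ := fun i => G.orderEmbOfFin rfl (Fin.castLE hfiber i)
  have hf (i : Fin (d + 1)) : f i < N ∧ l (f i) = l₀ := by
    simpa only [G, Finset.mem_filter, Finset.mem_range] using G.orderEmbOfFin_mem rfl _
  have hf_inj : Function.Injective f :=
    (G.orderEmbOfFin rfl).injective.comp (Fin.castLE_injective hfiber)
  have hmem (i : Fin (d + 1)) : γ (s (f i)) ∈ range γ ∩ l₀ :=
    ⟨mem_range_self _, (hf i).2 ▸ (hsl _ (hf i).1).2.2⟩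
  have hsep {i j : Fin (d + 1)} (hij : f i < f j) :
      connectedComponentIn (range γ ∩ l₀) (γ (s (f i))) ≠
        connectedComponentIn (range γ ∩ l₀) (γ (s (f j))) :=
    connectedComponentIn_range_inter_ne hγc hγi ht htN
      (fun k _ hk => hSL _ (htS k) (mem_sUnion_of_mem hk hl₀)) hij (hf j).1
      (hsl _ (hf i).1).1 (hsl _ (hf j).1).1 (hmem i).2
  obtain ⟨i, j, hij, hcomp⟩ := hstab l₀ (hL l₀ hl₀) _ hmem
  rcases Nat.lt_or_gt_of_ne (hf_inj.ne hij) with h | h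
  exacts [hsep h hcomp, hsep h hcomp.symm]

theorem card_image_connectedComponentIn_le {J : Set Pt} (hJ : IsJordanCurve J) {d : ℕ}
    (hstab : StabLE J d) {L : Finset (Set Pt)} (hL : ∀ l ∈ L, IsAffLine l) {Y : Finset Pt}
    (hYJ : (Y : Set Pt) ⊆ J) (hYL : (Y : Set Pt) ⊆ (⋃₀ (L : Set (Set Pt)))ᶜ)
    (hY2 : 2 ≤ (Y.image (connectedComponentIn (⋃₀ (L : Set (Set Pt)))ᶜ)).card) :
    (Y.image (connectedComponentIn (⋃₀ (L : Set (Set Pt)))ᶜ)).card ≤ L.card * d := by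
  have : Fact (0 < 2 * Real.pi) := ⟨by positivity⟩
  obtain ⟨γ, hγc, hγi, rfl⟩ := hJ.exists_addCircle
  set T := Y.image (connectedComponentIn (⋃₀ (L : Set (Set Pt)))ᶜ)
  let cell := fun z => connectedComponentIn (⋃₀ (L : Set (Set Pt)))ᶜ (γ z)
  let rep := Function.invFunOn cell (γ ⁻¹' Y)
  have hrep {c} (hc : c ∈ T) : rep c ∈ γ ⁻¹' Y ∧ cell (rep c) = c := by
    obtain ⟨y, hy, rfl⟩ := Finset.mem_image.1 hc
    obtain ⟨z, rfl⟩ := hYJ hy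
    have hex : ∃ z' ∈ γ ⁻¹' Y, cell z' = cell z := ⟨z, hy, rfl⟩
    exact ⟨Function.invFunOn_mem hex, Function.invFunOn_eq hex⟩
  have hinv : LeftInvOn cell rep T := fun c hc => (hrep hc).2
  rw [← Finset.card_image_of_injOn hinv.injOn] at hY2 ⊢
  refine card_le_card_mul_of_stabLE hγc hγi hstab hL (fun z hz => ?_)
    (by simpa using LeftInvOn.injOn hinv.rightInvOn_image) hY2
  obtain ⟨c, hc, rfl⟩ := Finset.mem_image.1 hz
  exact hYL (hrep hc).1

theorem stmt_7_general (X Y : Finset Pt) (hYX : Y ⊆ X) (d K : ℕ)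
    (J : Set Pt) (hJ : IsJordanCurve J)
    (hstab : StabLE J d) (hYJ : (↑Y : Set Pt) ⊆ J)
    (L : Finset (Set Pt)) (hL : L.card = K)
    (hlines : ∀ l ∈ L, IsAffLine l ∧ Disjoint l (↑X : Set Pt)) :
    ∃ cell, IsCell ↑L cell ∧
      (Y.card : ℝ) / (K * d) ≤ ((((↑X : Set Pt) ∩ cell).ncard : ℝ)) := by
  have hXΩ : (X : Set Pt) ⊆ (⋃₀ (L : Set (Set Pt)))ᶜ := fun x hx ⟨l, hl, hxl⟩ =>
    disjoint_left.1 (hlines l hl).2 hxl hx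
  rcases Y.eq_empty_or_nonempty with rfl | hY
  · obtain ⟨x, hx⟩ :=
      exists_notMem_sUnion_of_isAffLine_s7 L.countable_toSet fun l hl => (hlines l hl).1
    exact ⟨_, ⟨x, hx, rfl⟩, by simp⟩
  set T := Y.image (connectedComponentIn (⋃₀ (L : Set (Set Pt)))ᶜ)
  have hT : T.card • ((Y.card : ℝ) / (K * d)) ≤ Y.card := by
    rw [nsmul_eq_mul]
    rcases Nat.eq_zero_or_pos (K * d) with hKd | hKd
    · rw [← Nat.cast_mul, hKd, Nat.cast_zero, div_zero, mul_zero]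
      positivity
    have hTKd : T.card ≤ K * d := by
      by_cases hT2 : 2 ≤ T.card
      · exact hL ▸ card_image_connectedComponentIn_le hJ hstab (fun l hl => (hlines l hl).1) hYJ
          (fun y hy => hXΩ (hYX hy)) hT2
      · omega
    calc (T.card : ℝ) * (Y.card / (K * d)) ≤ (K * d : ℝ) * (Y.card / (K * d)) := by
          gcongr; exact_mod_cast hTKd
      _ = Y.card := mul_div_cancel₀ _ (by exact_mod_cast hKd.ne')
  obtain ⟨y, hy, hcell⟩ := exists_le_ncard_inter_connectedComponentIn hYX hXΩ hY hT
  exact ⟨_, ⟨y, hXΩ (hYX hy), rfl⟩, hcell⟩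

/-- Proposition 4.1. -/
theorem stmt_7 (X Y : Finset Pt) (hYX : Y ⊆ X) (d K : ℕ)
    (hd : 1 ≤ d) (hK : 1 ≤ K) (J : Set Pt) (hJ : IsJordanCurve J)
    (hstab : StabLE J d) (hYJ : (↑Y : Set Pt) ⊆ J)
    (L : Finset (Set Pt)) (hL : L.card = K)
    (hlines : ∀ l ∈ L, IsAffLine l ∧ Disjoint l (↑X : Set Pt)) :
    ∃ cell, IsCell ↑L cell ∧
      (Y.card : ℝ) / (K * d) ≤ ((((↑X : Set Pt) ∩ cell).ncard : ℝ)) :=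
  stmt_7_general X Y hYX d K J hJ hstab hYJ L hL hlines
end
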